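/- arXiv:2406.17356 — 4 statements merged into one kernel-verified Lean document; each statement's English description precedes it below -/
import Mathlib

section
/- Let d ≥ 0 and let v, B*, B : ℝ × ℝ³ → ℝ³ be smooth, vanishing for ‖x‖ ≥ R for some R > 0, and suppose that for every time t the constitutive relation B* = B + curl(curl B) holds in the space variable and the induction equation ∂ₜB* + curl(B* × (v − d·curl B)) + curl((curl v) × (curl B)) = 0 holds pointwise. Then for all t: (d/dt)[(1/2)·∫_{ℝ³} (‖B(t,x)‖² + ‖curl B(t,x)‖²) dx] + ∫_{ℝ³} (curl B(t,x)) · (B*(t,x) × v(t,x)) dx = 0. -/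
noncomputable section

open MeasureTheory Real

/-- Euclidean 3-space. -/
abbrev E3 : Type := EuclideanSpace ℝ (Fin 3)

/-- Build a vector in `E3` from three coordinates. -/
def mk3 (a b c : ℝ) : E3 := (WithLp.equiv 2 (Fin 3 → ℝ)).symm ![a, b, c]

/-- Partial derivative in the `i`-th coordinate direction. -/
def pd (i : Fin 3) (f : E3 → ℝ) (x : E3) : ℝ :=
  fderiv ℝ f x (EuclideanSpace.single i 1)

/-- Curl of a vector field on `ℝ³`. -/
def ecurl (f : E3 → E3) (x : E3) : E3 :=
  mk3 (pd 1 (fun y => f y 2) x - pd 2 (fun y => f y 1) x)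
      (pd 2 (fun y => f y 0) x - pd 0 (fun y => f y 2) x)
      (pd 0 (fun y => f y 1) x - pd 1 (fun y => f y 0) x)

/-- Divergence of a vector field on `ℝ³`. -/
def ediv (f : E3 → E3) (x : E3) : ℝ :=
  pd 0 (fun y => f y 0) x + pd 1 (fun y => f y 1) x + pd 2 (fun y => f y 2) x

/-- Gradient of a scalar field on `ℝ³`. -/
def egrad (h : E3 → ℝ) (x : E3) : E3 :=
  mk3 (pd 0 h x) (pd 1 h x) (pd 2 h x)

/-- Cross product on `ℝ³`. -/
def cross3 (u w : E3) : E3 :=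
  mk3 (u 1 * w 2 - u 2 * w 1) (u 2 * w 0 - u 0 * w 2) (u 0 * w 1 - u 1 * w 0)

/-- Advection `(g · ∇) f` of a vector field `f` along the vector `g`. -/
def advect (g : E3) (f : E3 → E3) (x : E3) : E3 :=
  mk3 (∑ j, g j * pd j (fun y => f y 0) x)
      (∑ j, g j * pd j (fun y => f y 1) x)
      (∑ j, g j * pd j (fun y => f y 2) x)

/-- Componentwise Laplacian of a vector field on `ℝ³`. -/
def elap (f : E3 → E3) (x : E3) : E3 :=
  mk3 (∑ i, pd i (fun y => pd i (fun z => f z 0) y) x)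
      (∑ i, pd i (fun y => pd i (fun z => f z 1) y) x)
      (∑ i, pd i (fun y => pd i (fun z => f z 2) y) x)

/-- Time derivative of a time-dependent vector field. -/
def tderiv (f : ℝ → E3 → E3) (t : ℝ) (x : E3) : E3 :=
  deriv (fun s => f s x) t

@[simp] lemma mk3_zero (a b c : ℝ) : mk3 a b c 0 = a := rfl
@[simp] lemma mk3_one (a b c : ℝ) : mk3 a b c 1 = b := rfl
@[simp] lemma mk3_two (a b c : ℝ) : mk3 a b c 2 = c := rfl

lemma pd_congr_nhds {f g : E3 → ℝ} {x : E3} (h : f =ᶠ[nhds x] g) (i : Fin 3) :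
    pd i f x = pd i g x := by
  unfold pd; rw [Filter.EventuallyEq.fderiv_eq h]

lemma ContDiff.pd' {f : E3 → ℝ} (hf : ContDiff ℝ (⊤ : ℕ∞) f) (i : Fin 3) :
    ContDiff ℝ (⊤ : ℕ∞) (pd i f) := by
  have h1 : ContDiff ℝ (⊤ : ℕ∞) (fderiv ℝ f) := hf.fderiv_right (by simp)
  exact (ContinuousLinearMap.apply ℝ ℝ (EuclideanSpace.single i 1)).contDiff.comp h1

lemma coord_le_norm (u : E3) (i : Fin 3) : |u i| ≤ ‖u‖ := by
  rw [EuclideanSpace.norm_eq, show |u i| = Real.sqrt (‖u i‖^2) by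
    rw [Real.sqrt_sq (norm_nonneg _)]; exact (Real.norm_eq_abs _).symm]
  apply Real.sqrt_le_sqrt
  exact Finset.single_le_sum (f := fun j => ‖u j‖^2) (fun j _ => sq_nonneg _) (Finset.mem_univ i)

lemma integral_pd_eq_zero {c : ℝ} (hc : 0 < c) (h : E3 → ℝ)
    (hsm : ContDiff ℝ (⊤:ℕ∞) h) (hz : ∀ x : E3, c < ‖x‖ → h x = 0) (i : Fin 3) :
    ∫ x : E3, pd i h x = 0 := by
  classical
  set L : (Fin 3 → ℝ) ≃L[ℝ] E3 := (PiLp.continuousLinearEquiv 2 ℝ (fun _ : Fin 3 => ℝ)).symm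
    with hL
  set g : (Fin 3 → ℝ) → ℝ := fun y => h (L y) with hgdef
  have hgsm : ContDiff ℝ (⊤:ℕ∞) g := hsm.comp L.contDiff
  have hLcoord : ∀ (y : Fin 3 → ℝ) (j : Fin 3), |y j| ≤ ‖L y‖ := by
    intro y j; exact coord_le_norm (L y) j
  have hgz : ∀ y : Fin 3 → ℝ, c < ‖L y‖ → g y = 0 := fun y hy => hz _ hy
  have hfd : ∀ y : Fin 3 → ℝ, fderiv ℝ g y (Pi.single i 1) =
      fderiv ℝ h (L y) (EuclideanSpace.single i 1) := by
    intro y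
    have : fderiv ℝ g y = (fderiv ℝ h (L y)).comp (L : (Fin 3 → ℝ) →L[ℝ] E3) := by
      rw [hgdef]
      exact (((hsm.differentiable (by simp)) (L y)).hasFDerivAt.comp y
        (L : (Fin 3 → ℝ) →L[ℝ] E3).hasFDerivAt).fderiv
    rw [this]; rfl
  -- transfer the integral to the pi space
  have htrans : ∫ x : E3, pd i h x = ∫ y : Fin 3 → ℝ, fderiv ℝ g y (Pi.single i 1) := by
    have hmp := (EuclideanSpace.volume_preserving_symm_measurableEquiv_toLp (Fin 3)).symm
    rw [← hmp.integral_comp (MeasurableEquiv.toLp 2 (Fin 3 → ℝ)).symm.symm.measurableEmbedding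
      (fun x => pd i h x)]
    congr 1; funext y; rw [hfd y]; rfl
  rw [htrans]
  -- the divergence theorem on the box [-(c+1), c+1]^3
  set a : Fin 3 → ℝ := fun _ => -(c+1) with ha
  set b : Fin 3 → ℝ := fun _ => (c+1) with hb
  have hle : a ≤ b := fun j => by simp [ha, hb]; linarith
  set f : Fin 3 → (Fin 3 → ℝ) → ℝ := fun j => if j = i then g else 0 with hf
  set f' : Fin 3 → (Fin 3 → ℝ) → (Fin 3 → ℝ) →L[ℝ] ℝ :=
    fun j => if j = i then fderiv ℝ g else 0 with hf'
  have hsum : ∀ y : Fin 3 → ℝ, (∑ j, f' j y (Pi.single j 1)) = fderiv ℝ g y (Pi.single i 1) := by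
    intro y
    rw [Finset.sum_eq_single_of_mem i (Finset.mem_univ i)]
    · simp [hf']
    · intro j _ hj; simp [hf', hj]
  have hbig : ∀ y : Fin 3 → ℝ, (c < |y 0| ∨ c < |y 1| ∨ c < |y 2|) → g y = 0 := by
    rintro y (hy | hy | hy) <;>
      exact hgz y (lt_of_lt_of_le hy (hLcoord y _))
  have key := MeasureTheory.integral_divergence_of_hasFDerivAt_off_countable'
    a b hle f f' ∅ Set.countable_empty
    (by
      intro j
      by_cases hj : j = i
      · simp only [hf, if_pos hj]; exact hgsm.continuous.continuousOn
      · simp only [hf, if_neg hj]; exact continuousOn_const)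
    (by
      intro y _ j
      by_cases hj : j = i
      · simp only [hf, hf', if_pos hj]
        exact ((hgsm.differentiable (by simp)) y).hasFDerivAt
      · simp only [hf, hf', if_neg hj]; exact hasFDerivAt_const 0 y)
    (by
      have : Continuous fun y : Fin 3 → ℝ => fderiv ℝ g y (Pi.single i 1) := by
        exact (ContinuousLinearMap.apply ℝ ℝ (Pi.single i 1)).continuous.comp
          (hgsm.continuous_fderiv (by simp))
      have h2 : Continuous fun y : Fin 3 → ℝ => ∑ j, f' j y (Pi.single j 1) := by
        simpa only [funext hsum] using this
      exact h2.continuousOn.integrableOn_compact isCompact_Icc)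
  have hzero_out : ∀ x : Fin 3 → ℝ, x ∉ Set.Icc a b → fderiv ℝ g x (Pi.single i 1) = 0 := by
    intro x hx
    have : ∃ j : Fin 3, c < |x j| := by
      by_contra hcon
      push_neg at hcon
      apply hx
      constructor <;> intro j <;>
        [ (have := hcon j; simp [ha]; cases abs_le.1 this; linarith);
          (have := hcon j; simp [hb]; cases abs_le.1 this; linarith) ]
    obtain ⟨j, hj⟩ := this
    have hU : IsOpen {y : Fin 3 → ℝ | c < |y j|} :=
      isOpen_lt continuous_const ((continuous_apply j).abs)
    have heq : g =ᶠ[nhds x] fun _ => (0:ℝ) :=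
      Filter.eventually_of_mem (hU.mem_nhds hj)
        (fun y hy => hgz y (lt_of_lt_of_le hy (hLcoord y j)))
    rw [heq.fderiv_eq]; simp
  have hLHS : (∫ y in Set.Icc a b, ∑ j, f' j y (Pi.single j 1)) =
      ∫ y : Fin 3 → ℝ, fderiv ℝ g y (Pi.single i 1) := by
    rw [show (fun y : Fin 3 → ℝ => ∑ j, f' j y (Pi.single j 1)) =
        fun y => fderiv ℝ g y (Pi.single i 1) from funext hsum]
    exact MeasureTheory.setIntegral_eq_integral_of_forall_compl_eq_zero hzero_out
  have hface : ∀ (j : Fin 3) (v : ℝ), c < |v| → ∀ y : Fin 2 → ℝ,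
      f j (Fin.insertNth j v y) = 0 := by
    intro j v hv y
    by_cases hj : j = i
    · subst hj
      simp only [hf, if_pos rfl]
      apply hgz
      refine lt_of_lt_of_le ?_ (hLcoord _ j)
      rwa [Fin.insertNth_apply_same]
    · simp [hf, hj]
  have hRHS : (∑ j : Fin 3,
      ((∫ y in Set.Icc (a ∘ Fin.succAbove j) (b ∘ Fin.succAbove j),
          f j (Fin.insertNth j (b j) y)) -
        ∫ y in Set.Icc (a ∘ Fin.succAbove j) (b ∘ Fin.succAbove j),
          f j (Fin.insertNth j (a j) y))) = 0 := by
    apply Finset.sum_eq_zero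
    intro j _
    have h1 : ∀ y : Fin 2 → ℝ, f j (Fin.insertNth j (b j) y) = 0 :=
      hface j (b j) (by simp [hb]; rw [abs_of_pos (by linarith)]; linarith)
    have h2 : ∀ y : Fin 2 → ℝ, f j (Fin.insertNth j (a j) y) = 0 :=
      hface j (a j) (by simp [ha]; rw [abs_of_neg (by linarith)]; linarith)
    simp only [funext h1, funext h2, integral_zero, sub_zero]
  rw [← hLHS, key, hRHS]

lemma pd_vanish {c : ℝ} {f : E3 → ℝ} (hz : ∀ x : E3, c < ‖x‖ → f x = 0) {x : E3}
    (hx : c < ‖x‖) (i : Fin 3) : pd i f x = 0 := by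
  have hU : IsOpen {y : E3 | c < ‖y‖} := isOpen_lt continuous_const continuous_norm
  have heq : f =ᶠ[nhds x] fun _ => (0:ℝ) :=
    Filter.eventually_of_mem (hU.mem_nhds hx) hz
  unfold pd; rw [heq.fderiv_eq]; simp

lemma pd_sub {f g : E3 → ℝ} {x : E3} (hf : DifferentiableAt ℝ f x)
    (hg : DifferentiableAt ℝ g x) (i : Fin 3) :
    pd i (fun y => f y - g y) x = pd i f x - pd i g x := by
  unfold pd; rw [fderiv_fun_sub hf hg]; rfl

lemma pd_mul {f g : E3 → ℝ} {x : E3} (hf : DifferentiableAt ℝ f x)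
    (hg : DifferentiableAt ℝ g x) (i : Fin 3) :
    pd i (fun y => f y * g y) x = pd i f x * g x + f x * pd i g x := by
  unfold pd; rw [fderiv_fun_mul hf hg]
  simp only [ContinuousLinearMap.add_apply, ContinuousLinearMap.smul_apply, smul_eq_mul]
  ring

lemma integrable_vanish {c : ℝ} {f : E3 → ℝ} (hf : Continuous f)
    (hz : ∀ x : E3, c < ‖x‖ → f x = 0) : Integrable f := by
  apply hf.integrable_of_hasCompactSupport
  apply HasCompactSupport.intro (isCompact_closedBall (0:E3) c)
  intro x hx
  refine hz x ?_
  simp only [Metric.mem_closedBall, dist_zero_right, not_le] at hx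
  exact hx

lemma inner3 (u v : E3) : (inner ℝ u v : ℝ) = u 0 * v 0 + u 1 * v 1 + u 2 * v 2 := by
  simp [PiLp.inner_apply, RCLike.inner_apply, Fin.sum_univ_three]; ring

lemma integral_inner_curl {c : ℝ} (hc : 0 < c) (f g : E3 → E3)
    (hfs : ∀ k, ContDiff ℝ (⊤:ℕ∞) (fun x => f x k))
    (hgs : ∀ k, ContDiff ℝ (⊤:ℕ∞) (fun x => g x k))
    (hfz : ∀ x : E3, c < ‖x‖ → f x = 0) (hgz : ∀ x : E3, c < ‖x‖ → g x = 0) :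
    ∫ x : E3, (inner ℝ (ecurl f x) (g x) : ℝ) = ∫ x : E3, (inner ℝ (f x) (ecurl g x) : ℝ) := by
  have hfz' : ∀ (k : Fin 3) (x : E3), c < ‖x‖ → f x k = 0 := fun k x hx => by rw [hfz x hx]; rfl
  have hgz' : ∀ (k : Fin 3) (x : E3), c < ‖x‖ → g x k = 0 := fun k x hx => by rw [hgz x hx]; rfl
  have hd : ∀ (h : E3 → E3) (hs : ∀ k, ContDiff ℝ (⊤:ℕ∞) (fun x => h x k)) (k : Fin 3) (x : E3),
      DifferentiableAt ℝ (fun y => h y k) x :=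
    fun h hs k x => ((hs k).differentiable (by simp)).differentiableAt
  -- cross-product components of f × g
  set c0 : E3 → ℝ := fun x => f x 1 * g x 2 - f x 2 * g x 1 with hc0
  set c1 : E3 → ℝ := fun x => f x 2 * g x 0 - f x 0 * g x 2 with hc1
  set c2 : E3 → ℝ := fun x => f x 0 * g x 1 - f x 1 * g x 0 with hc2
  have hcs : ContDiff ℝ (⊤:ℕ∞) c0 ∧ ContDiff ℝ (⊤:ℕ∞) c1 ∧ ContDiff ℝ (⊤:ℕ∞) c2 :=
    ⟨((hfs 1).mul (hgs 2)).sub ((hfs 2).mul (hgs 1)),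
     ((hfs 2).mul (hgs 0)).sub ((hfs 0).mul (hgs 2)),
     ((hfs 0).mul (hgs 1)).sub ((hfs 1).mul (hgs 0))⟩
  have hcz : (∀ x : E3, c < ‖x‖ → c0 x = 0) ∧ (∀ x : E3, c < ‖x‖ → c1 x = 0)
      ∧ (∀ x : E3, c < ‖x‖ → c2 x = 0) :=
    ⟨fun x hx => by simp [hc0, hfz' _ x hx],
     fun x hx => by simp [hc1, hfz' _ x hx],
     fun x hx => by simp [hc2, hfz' _ x hx]⟩
  -- pointwise: inner ℝ (curl f) g - inner f (curl g) = div (f × g)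
  have hpt : ∀ x : E3, (inner ℝ (ecurl f x) (g x) : ℝ) - (inner ℝ (f x) (ecurl g x) : ℝ)
      = pd 0 c0 x + pd 1 c1 x + pd 2 c2 x := by
    intro x
    rw [hc0, hc1, hc2]
    rw [pd_sub (((hfs 1).mul (hgs 2)).differentiable (by simp)).differentiableAt
        (((hfs 2).mul (hgs 1)).differentiable (by simp)).differentiableAt,
      pd_sub (((hfs 2).mul (hgs 0)).differentiable (by simp)).differentiableAt
        (((hfs 0).mul (hgs 2)).differentiable (by simp)).differentiableAt,
      pd_sub (((hfs 0).mul (hgs 1)).differentiable (by simp)).differentiableAt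
        (((hfs 1).mul (hgs 0)).differentiable (by simp)).differentiableAt,
      pd_mul (hd f hfs 1 x) (hd g hgs 2 x), pd_mul (hd f hfs 2 x) (hd g hgs 1 x),
      pd_mul (hd f hfs 2 x) (hd g hgs 0 x), pd_mul (hd f hfs 0 x) (hd g hgs 2 x),
      pd_mul (hd f hfs 0 x) (hd g hgs 1 x), pd_mul (hd f hfs 1 x) (hd g hgs 0 x),
      inner3, inner3]
    simp only [ecurl, mk3_zero, mk3_one, mk3_two]
    ring
  -- continuity of the two integrands
  have hcontA : Continuous fun x => (inner ℝ (ecurl f x) (g x) : ℝ) := by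
    have : (fun x => (inner ℝ (ecurl f x) (g x) : ℝ)) = fun x =>
        (pd 1 (fun y => f y 2) x - pd 2 (fun y => f y 1) x) * g x 0
        + (pd 2 (fun y => f y 0) x - pd 0 (fun y => f y 2) x) * g x 1
        + (pd 0 (fun y => f y 1) x - pd 1 (fun y => f y 0) x) * g x 2 := by
      funext x; rw [inner3]; simp [ecurl]
    rw [this]
    exact ((((((hfs 2).pd' 1).continuous.sub ((hfs 1).pd' 2).continuous).mul
        (hgs 0).continuous).add
      ((((hfs 0).pd' 2).continuous.sub ((hfs 2).pd' 0).continuous).mul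
        (hgs 1).continuous)).add
      ((((hfs 1).pd' 0).continuous.sub ((hfs 0).pd' 1).continuous).mul
        (hgs 2).continuous))
  have hcontB : Continuous fun x => (inner ℝ (f x) (ecurl g x) : ℝ) := by
    have : (fun x => (inner ℝ (f x) (ecurl g x) : ℝ)) = fun x =>
        f x 0 * (pd 1 (fun y => g y 2) x - pd 2 (fun y => g y 1) x)
        + f x 1 * (pd 2 (fun y => g y 0) x - pd 0 (fun y => g y 2) x)
        + f x 2 * (pd 0 (fun y => g y 1) x - pd 1 (fun y => g y 0) x) := by
      funext x; rw [inner3]; simp [ecurl]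
    rw [this]
    exact (((hfs 0).continuous.mul
        (((hgs 2).pd' 1).continuous.sub ((hgs 1).pd' 2).continuous)).add
      ((hfs 1).continuous.mul
        (((hgs 0).pd' 2).continuous.sub ((hgs 2).pd' 0).continuous))).add
      ((hfs 2).continuous.mul
        (((hgs 1).pd' 0).continuous.sub ((hgs 0).pd' 1).continuous))
  have hintA : Integrable fun x : E3 => (inner ℝ (ecurl f x) (g x) : ℝ) :=
    integrable_vanish hcontA (fun x hx => by rw [hgz x hx]; simp)
  have hintB : Integrable fun x : E3 => (inner ℝ (f x) (ecurl g x) : ℝ) :=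
    integrable_vanish hcontB (fun x hx => by rw [hfz x hx]; simp)
  rw [← sub_eq_zero, ← integral_sub hintA hintB]
  have : (fun x : E3 => (inner ℝ (ecurl f x) (g x) : ℝ) - (inner ℝ (f x) (ecurl g x) : ℝ))
      = fun x => pd 0 c0 x + pd 1 c1 x + pd 2 c2 x := funext hpt
  rw [this]
  have i0 := integral_pd_eq_zero hc c0 hcs.1 hcz.1 0
  have i1 := integral_pd_eq_zero hc c1 hcs.2.1 hcz.2.1 1
  have i2 := integral_pd_eq_zero hc c2 hcs.2.2 hcz.2.2 2
  have j0 : Integrable fun x : E3 => pd 0 c0 x :=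
    integrable_vanish (hcs.1.pd' 0).continuous (fun x hx => pd_vanish hcz.1 hx 0)
  have j1 : Integrable fun x : E3 => pd 1 c1 x :=
    integrable_vanish (hcs.2.1.pd' 1).continuous (fun x hx => pd_vanish hcz.2.1 hx 1)
  have j2 : Integrable fun x : E3 => pd 2 c2 x :=
    integrable_vanish (hcs.2.2.pd' 2).continuous (fun x hx => pd_vanish hcz.2.2 hx 2)
  have j01 : Integrable (fun x : E3 => pd 0 c0 x + pd 1 c1 x) := j0.add j1
  rw [integral_add j01 j2, integral_add j0 j1, i0, i1, i2]
  simp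

-- partial application derivative lemmas
lemma fderiv_partial_snd {F : ℝ × E3 → ℝ} (hF : Differentiable ℝ F) (t : ℝ) (x : E3)
    (e : E3) : fderiv ℝ (fun y => F (t, y)) x e = fderiv ℝ F (t, x) (0, e) := by
  have hj : HasFDerivAt (fun y : E3 => (t, y))
      ((0 : E3 →L[ℝ] ℝ).prod (ContinuousLinearMap.id ℝ E3)) x :=
    (hasFDerivAt_const t x).prodMk (hasFDerivAt_id x)
  have h : HasFDerivAt (fun y => F (t, y))
      ((fderiv ℝ F (t, x)).comp ((0 : E3 →L[ℝ] ℝ).prod (ContinuousLinearMap.id ℝ E3))) x :=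
    (hF (t, x)).hasFDerivAt.comp x hj
  rw [h.fderiv]; rfl

lemma hasDerivAt_partial_fst {F : ℝ × E3 → ℝ} (hF : Differentiable ℝ F) (t : ℝ) (x : E3) :
    HasDerivAt (fun s => F (s, x)) (fderiv ℝ F (t, x) (1, 0)) t := by
  have hj : HasFDerivAt (fun s : ℝ => (s, x))
      ((ContinuousLinearMap.id ℝ ℝ).prod (0 : ℝ →L[ℝ] E3)) t :=
    (hasFDerivAt_id t).prodMk (hasFDerivAt_const x t)
  have h : HasFDerivAt (fun s => F (s, x))
      ((fderiv ℝ F (t, x)).comp ((ContinuousLinearMap.id ℝ ℝ).prod (0 : ℝ →L[ℝ] E3))) t :=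
    (hF (t, x)).hasFDerivAt.comp t hj
  have := h.hasDerivAt
  simpa using this

lemma contDiff_fderiv_apply {F : ℝ × E3 → ℝ} (hF : ContDiff ℝ (⊤:ℕ∞) F) (w : ℝ × E3) :
    ContDiff ℝ (⊤:ℕ∞) (fun p => fderiv ℝ F p w) :=
  (ContinuousLinearMap.apply ℝ ℝ w).contDiff.comp (hF.fderiv_right (by simp))

lemma fderiv_apply_comm {Φ : ℝ × E3 → (ℝ × E3) →L[ℝ] ℝ} (hΦ : Differentiable ℝ Φ)
    (q w v : ℝ × E3) : fderiv ℝ (fun p => Φ p v) q w = (fderiv ℝ Φ q w) v := by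
  have h1 : HasFDerivAt (fun p => Φ p v)
      ((ContinuousLinearMap.apply ℝ ℝ v).comp (fderiv ℝ Φ q)) q :=
    (ContinuousLinearMap.apply ℝ ℝ v).hasFDerivAt.comp q (hΦ q).hasFDerivAt
  rw [h1.fderiv]; rfl

/-- Clairaut: the time derivative of a spatial partial derivative is the spatial partial
derivative of the time derivative. -/
lemma clairaut {F : ℝ × E3 → ℝ} (hF : ContDiff ℝ (⊤:ℕ∞) F) (i : Fin 3) (t : ℝ) (x : E3) :
    HasDerivAt (fun s => pd i (fun y => F (s, y)) x)
      (pd i (fun y => fderiv ℝ F (t, y) (1, 0)) x) t := by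
  have hdF : Differentiable ℝ F := hF.differentiable (by simp)
  set Φ : ℝ × E3 → (ℝ × E3) →L[ℝ] ℝ := fderiv ℝ F with hΦdef
  have hΦ : ContDiff ℝ (⊤:ℕ∞) Φ := hF.fderiv_right (by simp)
  have hdΦ : Differentiable ℝ Φ := hΦ.differentiable (by simp)
  set ei : E3 := EuclideanSpace.single i 1
  have h1 : (fun s => pd i (fun y => F (s, y)) x) = fun s => Φ (s, x) ((0:ℝ), ei) := by
    funext s; exact fderiv_partial_snd hdF s x ei
  -- the function A p := Φ p (0, ei) is smooth
  have hA : ContDiff ℝ (⊤:ℕ∞) (fun p => Φ p ((0:ℝ), ei)) := contDiff_fderiv_apply hF _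
  have h2 : HasDerivAt (fun s => Φ (s, x) ((0:ℝ), ei))
      (fderiv ℝ (fun p => Φ p ((0:ℝ), ei)) (t, x) (1, 0)) t :=
    hasDerivAt_partial_fst (hA.differentiable (by simp)) t x
  have h3 : fderiv ℝ (fun p => Φ p ((0:ℝ), ei)) (t, x) (1, 0)
      = (fderiv ℝ Φ (t, x) ((1:ℝ), (0:E3))) ((0:ℝ), ei) :=
    fderiv_apply_comm hdΦ (t, x) _ _
  have hsymm : (fderiv ℝ Φ (t, x) ((1:ℝ), (0:E3))) ((0:ℝ), ei)
      = (fderiv ℝ Φ (t, x) ((0:ℝ), ei)) ((1:ℝ), (0:E3)) :=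
    second_derivative_symmetric (fun y => (hdF y).hasFDerivAt)
      ((hdΦ (t, x)).hasFDerivAt) _ _
  have h4 : pd i (fun y => fderiv ℝ F (t, y) (1, 0)) x
      = (fderiv ℝ Φ (t, x) ((0:ℝ), ei)) ((1:ℝ), (0:E3)) := by
    have hBsm : ContDiff ℝ (⊤:ℕ∞) (fun p => Φ p ((1:ℝ), (0:E3))) := contDiff_fderiv_apply hF _
    have : pd i (fun y => Φ (t, y) ((1:ℝ), (0:E3))) x
        = fderiv ℝ (fun p => Φ p ((1:ℝ), (0:E3))) (t, x) ((0:ℝ), ei) :=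
      fderiv_partial_snd (hBsm.differentiable (by simp)) t x ei
    rw [hΦdef] at this ⊢
    rw [this, fderiv_apply_comm hdΦ]
  rw [h1, h4, ← hsymm, ← h3]
  exact h2

def Dt (F : ℝ × E3 → ℝ) : ℝ × E3 → ℝ := fun p => fderiv ℝ F p (1, 0)

def Apd (i : Fin 3) (F : ℝ × E3 → ℝ) : ℝ × E3 → ℝ :=
  fun p => fderiv ℝ F p (0, EuclideanSpace.single i 1)

lemma Dt_smooth {F : ℝ × E3 → ℝ} (hF : ContDiff ℝ (⊤:ℕ∞) F) : ContDiff ℝ (⊤:ℕ∞) (Dt F) :=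
  contDiff_fderiv_apply hF _

lemma Apd_smooth {F : ℝ × E3 → ℝ} (hF : ContDiff ℝ (⊤:ℕ∞) F) (i : Fin 3) :
    ContDiff ℝ (⊤:ℕ∞) (Apd i F) :=
  contDiff_fderiv_apply hF _

lemma Apd_eq_pd {F : ℝ × E3 → ℝ} (hF : ContDiff ℝ (⊤:ℕ∞) F) (i : Fin 3) (s : ℝ) (x : E3) :
    Apd i F (s, x) = pd i (fun y => F (s, y)) x :=
  (fderiv_partial_snd (hF.differentiable (by simp)) s x _).symm

lemma Dt_hasDerivAt {F : ℝ × E3 → ℝ} (hF : ContDiff ℝ (⊤:ℕ∞) F) (s : ℝ) (x : E3) :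
    HasDerivAt (fun s' => F (s', x)) (Dt F (s, x)) s :=
  hasDerivAt_partial_fst (hF.differentiable (by simp)) s x

lemma Dt_Apd {F : ℝ × E3 → ℝ} (hF : ContDiff ℝ (⊤:ℕ∞) F) (i : Fin 3) (p : ℝ × E3) :
    Dt (Apd i F) p = Apd i (Dt F) p := by
  obtain ⟨t, x⟩ := p
  have h1 : HasDerivAt (fun s => Apd i F (s, x)) (Dt (Apd i F) (t, x)) t :=
    Dt_hasDerivAt (Apd_smooth hF i) t x
  have h2 : (fun s => Apd i F (s, x)) = fun s => pd i (fun y => F (s, y)) x :=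
    funext fun s => Apd_eq_pd hF i s x
  rw [h2] at h1
  have h3 := clairaut hF i t x
  have h4 := h1.unique h3
  rw [h4, Apd_eq_pd (Dt_smooth hF) i t x]
  rfl

lemma Dt_add {F G : ℝ × E3 → ℝ} (hF : Differentiable ℝ F) (hG : Differentiable ℝ G)
    (p : ℝ × E3) : Dt (fun q => F q + G q) p = Dt F p + Dt G p := by
  unfold Dt; rw [fderiv_fun_add (hF p) (hG p)]; rfl

lemma Dt_sub {F G : ℝ × E3 → ℝ} (hF : Differentiable ℝ F) (hG : Differentiable ℝ G)
    (p : ℝ × E3) : Dt (fun q => F q - G q) p = Dt F p - Dt G p := by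
  unfold Dt; rw [fderiv_fun_sub (hF p) (hG p)]; rfl

lemma Dt_mul {F G : ℝ × E3 → ℝ} (hF : Differentiable ℝ F) (hG : Differentiable ℝ G)
    (p : ℝ × E3) : Dt (fun q => F q * G q) p = Dt F p * G p + F p * Dt G p := by
  unfold Dt; rw [fderiv_fun_mul (hF p) (hG p)]
  simp only [ContinuousLinearMap.add_apply, ContinuousLinearMap.smul_apply, smul_eq_mul]
  ring

def VF (F : Fin 3 → ℝ × E3 → ℝ) (t : ℝ) (x : E3) : E3 :=
  mk3 (F 0 (t, x)) (F 1 (t, x)) (F 2 (t, x))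

lemma mk3_eta (u : E3) : mk3 (u 0) (u 1) (u 2) = u := by
  refine PiLp.ext fun k => ?_
  fin_cases k <;> rfl

lemma mk3_zero_vec : mk3 0 0 0 = (0 : E3) := by
  refine PiLp.ext fun k => ?_
  fin_cases k <;> rfl

lemma VF_apply (F : Fin 3 → ℝ × E3 → ℝ) (t : ℝ) (x : E3) (k : Fin 3) :
    VF F t x k = F k (t, x) := by
  fin_cases k <;> rfl

def curlA (F : Fin 3 → ℝ × E3 → ℝ) : Fin 3 → ℝ × E3 → ℝ :=
  ![fun p => Apd 1 (F 2) p - Apd 2 (F 1) p,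
    fun p => Apd 2 (F 0) p - Apd 0 (F 2) p,
    fun p => Apd 0 (F 1) p - Apd 1 (F 0) p]

lemma curlA_smooth {F : Fin 3 → ℝ × E3 → ℝ} (hF : ∀ k, ContDiff ℝ (⊤:ℕ∞) (F k)) (k : Fin 3) :
    ContDiff ℝ (⊤:ℕ∞) (curlA F k) := by
  fin_cases k <;> simp only [curlA, Matrix.cons_val_zero, Matrix.cons_val_one, Matrix.head_cons,
    Matrix.cons_val_two, Matrix.tail_cons] <;>
    exact (Apd_smooth (hF _) _).sub (Apd_smooth (hF _) _)

lemma mk3_congr {a b c a' b' c' : ℝ} (h1 : a = a') (h2 : b = b') (h3 : c = c') :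
    mk3 a b c = mk3 a' b' c' := by rw [h1, h2, h3]

lemma ecurl_VF {F : Fin 3 → ℝ × E3 → ℝ} (hF : ∀ k, ContDiff ℝ (⊤:ℕ∞) (F k)) (t : ℝ) :
    ecurl (VF F t) = VF (curlA F) t := by
  funext x
  show mk3 (pd 1 (fun y => F 2 (t, y)) x - pd 2 (fun y => F 1 (t, y)) x)
      (pd 2 (fun y => F 0 (t, y)) x - pd 0 (fun y => F 2 (t, y)) x)
      (pd 0 (fun y => F 1 (t, y)) x - pd 1 (fun y => F 0 (t, y)) x)
    = mk3 (Apd 1 (F 2) (t, x) - Apd 2 (F 1) (t, x))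
      (Apd 2 (F 0) (t, x) - Apd 0 (F 2) (t, x))
      (Apd 0 (F 1) (t, x) - Apd 1 (F 0) (t, x))
  exact (mk3_congr
    (by rw [Apd_eq_pd (hF 2) 1 t x, Apd_eq_pd (hF 1) 2 t x])
    (by rw [Apd_eq_pd (hF 0) 2 t x, Apd_eq_pd (hF 2) 0 t x])
    (by rw [Apd_eq_pd (hF 1) 0 t x, Apd_eq_pd (hF 0) 1 t x])).symm

lemma Dt_curlA {F : Fin 3 → ℝ × E3 → ℝ} (hF : ∀ k, ContDiff ℝ (⊤:ℕ∞) (F k)) (k : Fin 3)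
    (p : ℝ × E3) : Dt (curlA F k) p = curlA (fun j => Dt (F j)) k p := by
  have hr : ∀ (i j : Fin 3) (G H : ℝ × E3 → ℝ), ContDiff ℝ (⊤:ℕ∞) G → ContDiff ℝ (⊤:ℕ∞) H →
      Dt (fun q => Apd i G q - Apd j H q) p = Apd i (Dt G) p - Apd j (Dt H) p := by
    intro i j G H hG hH
    rw [Dt_sub ((Apd_smooth hG i).differentiable (by simp))
      ((Apd_smooth hH j).differentiable (by simp)), Dt_Apd hG i p, Dt_Apd hH j p]
  fin_cases k
  · exact hr 1 2 (F 2) (F 1) (hF 2) (hF 1)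
  · exact hr 2 0 (F 0) (F 2) (hF 0) (hF 2)
  · exact hr 0 1 (F 1) (F 0) (hF 1) (hF 0)

lemma norm_sq3 (u : E3) : ‖u‖^2 = u 0 * u 0 + u 1 * u 1 + u 2 * u 2 := by
  rw [← real_inner_self_eq_norm_sq, inner3]

lemma ecurl_coord_smooth {f : E3 → E3} (hf : ∀ k, ContDiff ℝ (⊤:ℕ∞) (fun x => f x k))
    (k : Fin 3) : ContDiff ℝ (⊤:ℕ∞) (fun x => ecurl f x k) := by
  fin_cases k
  · exact ((hf 2).pd' 1).sub ((hf 1).pd' 2)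
  · exact ((hf 0).pd' 2).sub ((hf 2).pd' 0)
  · exact ((hf 1).pd' 0).sub ((hf 0).pd' 1)

lemma ecurl_vanish {c : ℝ} {f : E3 → E3} (hz : ∀ x : E3, c < ‖x‖ → f x = 0) {x : E3}
    (hx : c < ‖x‖) : ecurl f x = 0 := by
  have hk : ∀ (k : Fin 3), ∀ y : E3, c < ‖y‖ → f y k = 0 := fun k y hy => by rw [hz y hy]; rfl
  show mk3 _ _ _ = 0
  rw [pd_vanish (hk 2) hx 1, pd_vanish (hk 1) hx 2, pd_vanish (hk 0) hx 2,
    pd_vanish (hk 2) hx 0, pd_vanish (hk 1) hx 0, pd_vanish (hk 0) hx 1, sub_self]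
  exact mk3_zero_vec

lemma cross3_smooth {f g : E3 → E3} (hf : ∀ k, ContDiff ℝ (⊤:ℕ∞) (fun x => f x k))
    (hg : ∀ k, ContDiff ℝ (⊤:ℕ∞) (fun x => g x k)) (k : Fin 3) :
    ContDiff ℝ (⊤:ℕ∞) (fun x => cross3 (f x) (g x) k) := by
  fin_cases k
  · exact ((hf 1).mul (hg 2)).sub ((hf 2).mul (hg 1))
  · exact ((hf 2).mul (hg 0)).sub ((hf 0).mul (hg 2))
  · exact ((hf 0).mul (hg 1)).sub ((hf 1).mul (hg 0))

lemma cross3_zero_left (w : E3) : cross3 0 w = 0 := by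
  refine PiLp.ext fun k => ?_
  fin_cases k <;> · show (0:E3) _ * _ - (0:E3) _ * _ = (0:E3) _; simp

lemma cross3_zero_right (u : E3) : cross3 u 0 = 0 := by
  refine PiLp.ext fun k => ?_
  fin_cases k <;> · show _ * (0:E3) _ - _ * (0:E3) _ = (0:E3) _; simp

lemma integrable_inner {c : ℝ} {f g : E3 → E3} (hf : ∀ k, Continuous fun x => f x k)
    (hg : ∀ k, Continuous fun x => g x k) (hgz : ∀ x : E3, c < ‖x‖ → g x = 0) :
    Integrable fun x : E3 => (inner ℝ (f x) (g x) : ℝ) := by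
  have heq : (fun x : E3 => (inner ℝ (f x) (g x) : ℝ))
      = fun x => f x 0 * g x 0 + f x 1 * g x 1 + f x 2 * g x 2 := funext fun x => inner3 _ _
  rw [heq]
  refine integrable_vanish (c := c) ((((hf 0).mul (hg 0)).add ((hf 1).mul (hg 1))).add
    ((hf 2).mul (hg 2))) (fun x hx => ?_)
  rw [hgz x hx]
  show _ * (0:E3) _ + _ * (0:E3) _ + _ * (0:E3) _ = 0
  simp


/-- Magnetic part of the energy balance for incompressible extended MHD:
`d/dt [½ ∫ (‖B‖² + ‖curl B‖²)] + ∫ (curl B) · (B* × v) = 0`. -/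
theorem incompressible_XMHD_magnetic_energy_balance
    (d : ℝ) (hd : 0 ≤ d)
    (v Bs B : ℝ → E3 → E3)
    (hv : ContDiff ℝ (⊤ : ℕ∞) ↿v) (hBs : ContDiff ℝ (⊤ : ℕ∞) ↿Bs) (hB : ContDiff ℝ (⊤ : ℕ∞) ↿B)
    (R : ℝ) (hR : 0 < R)
    (hsupp : ∀ t x, R ≤ ‖x‖ → v t x = 0 ∧ B t x = 0 ∧ Bs t x = 0)
    (hconst : ∀ t x, Bs t x = B t x + ecurl (ecurl (B t)) x)
    (hind : ∀ t x,
      tderiv Bs t x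
        + ecurl (fun y => cross3 (Bs t y) (v t y - d • ecurl (B t) y)) x
        + ecurl (fun y => cross3 (ecurl (v t) y) (ecurl (B t) y)) x = 0) :
    ∀ t : ℝ,
      HasDerivAt (fun s => (1/2) * (∫ x : E3, (‖B s x‖^2 + ‖ecurl (B s) x‖^2)))
        (-(∫ x : E3, (inner ℝ (ecurl (B t) x) (cross3 (Bs t x) (v t x)) : ℝ))) t := by
  intro t
  have hv' : ContDiff ℝ (⊤:ℕ∞) ↿v := hv.of_le (by simp)
  have hBs' : ContDiff ℝ (⊤:ℕ∞) ↿Bs := hBs.of_le (by simp)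
  have hB' : ContDiff ℝ (⊤:ℕ∞) ↿B := hB.of_le (by simp)
  -- vanishing facts
  have hvz : ∀ s (x : E3), R < ‖x‖ → v s x = 0 := fun s x hx => (hsupp s x hx.le).1
  have hBz : ∀ s (x : E3), R < ‖x‖ → B s x = 0 := fun s x hx => (hsupp s x hx.le).2.1
  have hBsz : ∀ s (x : E3), R < ‖x‖ → Bs s x = 0 := fun s x hx => (hsupp s x hx.le).2.2
  -- scalar component triples
  set bF : Fin 3 → ℝ × E3 → ℝ := fun k p => B p.1 p.2 k with hbFdef
  set bsF : Fin 3 → ℝ × E3 → ℝ := fun k p => Bs p.1 p.2 k with hbsFdef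
  have hbFs : ∀ k, ContDiff ℝ (⊤:ℕ∞) (bF k) := fun k => contDiff_euclidean.mp hB' k
  have hbsFs : ∀ k, ContDiff ℝ (⊤:ℕ∞) (bsF k) := fun k => contDiff_euclidean.mp hBs' k
  have hBVF : ∀ s, B s = VF bF s := fun s => funext fun x => (mk3_eta (B s x)).symm
  have hBsVF : ∀ s, Bs s = VF bsF s := fun s => funext fun x => (mk3_eta (Bs s x)).symm
  set wF : Fin 3 → ℝ × E3 → ℝ := fun k => Dt (bF k) with hwFdef
  set wsF : Fin 3 → ℝ × E3 → ℝ := fun k => Dt (bsF k) with hwsFdef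
  have hwFs : ∀ k, ContDiff ℝ (⊤:ℕ∞) (wF k) := fun k => Dt_smooth (hbFs k)
  have hwsFs : ∀ k, ContDiff ℝ (⊤:ℕ∞) (wsF k) := fun k => Dt_smooth (hbsFs k)
  set W : E3 → E3 := VF wF t with hWdef
  set Ws : E3 → E3 := VF wsF t with hWsdef
  -- energy density
  set eF : ℝ × E3 → ℝ := fun p => ‖B p.1 p.2‖^2 + ‖ecurl (B p.1) p.2‖^2 with heFdef
  have hcurlBVF : ∀ s, ecurl (B s) = VF (curlA bF) s := by
    intro s; rw [hBVF s]; exact ecurl_VF hbFs s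
  have heF_eq : eF = fun p =>
      (bF 0 p * bF 0 p + bF 1 p * bF 1 p + bF 2 p * bF 2 p)
      + (curlA bF 0 p * curlA bF 0 p + curlA bF 1 p * curlA bF 1 p
        + curlA bF 2 p * curlA bF 2 p) := by
    funext p
    rw [heFdef]
    show ‖B p.1 p.2‖^2 + ‖ecurl (B p.1) p.2‖^2 = _
    rw [norm_sq3, norm_sq3, hcurlBVF p.1, VF_apply, VF_apply, VF_apply]
  have hcAs : ∀ k, ContDiff ℝ (⊤:ℕ∞) (curlA bF k) := curlA_smooth hbFs
  have heFsm : ContDiff ℝ (⊤:ℕ∞) eF := by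
    rw [heF_eq]
    exact ((((hbFs 0).mul (hbFs 0)).add ((hbFs 1).mul (hbFs 1))).add
        ((hbFs 2).mul (hbFs 2))).add
      ((((hcAs 0).mul (hcAs 0)).add ((hcAs 1).mul (hcAs 1))).add ((hcAs 2).mul (hcAs 2)))
  set G : ℝ × E3 → ℝ := Dt eF with hGdef
  have hGsm : ContDiff ℝ (⊤:ℕ∞) G := Dt_smooth heFsm
  have heFz : ∀ p : ℝ × E3, R < ‖p.2‖ → eF p = 0 := by
    intro p hp
    rw [heFdef]
    show ‖B p.1 p.2‖^2 + ‖ecurl (B p.1) p.2‖^2 = 0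
    rw [hBz p.1 p.2 hp, ecurl_vanish (hBz p.1) hp]
    simp
  have hGz : ∀ p : ℝ × E3, R < ‖p.2‖ → G p = 0 := by
    intro p hp
    have hU : IsOpen {q : ℝ × E3 | R < ‖q.2‖} :=
      isOpen_lt continuous_const (continuous_norm.comp continuous_snd)
    have heq : eF =ᶠ[nhds p] fun _ => (0:ℝ) :=
      Filter.eventually_of_mem (hU.mem_nhds hp) heFz
    rw [hGdef]
    show fderiv ℝ eF p (1, 0) = 0
    rw [heq.fderiv_eq]
    simp
  -- differentiation under the integral sign
  have hcont_s : ∀ s : ℝ, Continuous fun x : E3 => eF (s, x) :=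
    fun s => heFsm.continuous.comp (continuous_const.prodMk continuous_id)
  have hGcont_s : ∀ s : ℝ, Continuous fun x : E3 => G (s, x) :=
    fun s => hGsm.continuous.comp (continuous_const.prodMk continuous_id)
  have hK : IsCompact (Set.Icc (t-1) (t+1) ×ˢ Metric.closedBall (0:E3) (R+1)) :=
    isCompact_Icc.prod (isCompact_closedBall _ _)
  obtain ⟨C, hC⟩ := hK.exists_bound_of_continuousOn hGsm.continuous.continuousOn
  set bound : E3 → ℝ := (Metric.closedBall (0:E3) (R+1)).indicator (fun _ => C) with hbnd
  have hder : HasDerivAt (fun s => ∫ x : E3, eF (s, x)) (∫ x : E3, G (t, x)) t := by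
    refine (hasDerivAt_integral_of_dominated_loc_of_deriv_le (F := fun s x => eF (s, x))
      (F' := fun s x => G (s, x)) (bound := bound) (Metric.ball_mem_nhds t one_pos)
      (Filter.Eventually.of_forall fun s => (hcont_s s).aestronglyMeasurable)
      (integrable_vanish (hcont_s t) (fun x hx => heFz (t, x) hx))
      ((hGcont_s t).aestronglyMeasurable)
      (Filter.Eventually.of_forall fun x => ?_)
      ?_
      (Filter.Eventually.of_forall fun x s _ => Dt_hasDerivAt heFsm s x)).2
    · intro s hs
      show ‖G (s, x)‖ ≤ bound x
      by_cases hx : x ∈ Metric.closedBall (0:E3) (R+1)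
      · have hsI : s ∈ Set.Icc (t-1) (t+1) := by
          rw [Metric.mem_ball, Real.dist_eq] at hs
          cases abs_lt.mp hs with
          | intro h1 h2 => exact ⟨by linarith, by linarith⟩
        have := hC (s, x) ⟨hsI, hx⟩
        rwa [hbnd, Set.indicator_of_mem hx]
      · have hxn : R < ‖x‖ := by
          rw [Metric.mem_closedBall, dist_zero_right, not_le] at hx
          linarith
        rw [hbnd, Set.indicator_of_notMem hx, hGz (s, x) hxn]
        simp
    · rw [hbnd]
      rw [integrable_indicator_iff measurableSet_closedBall]
      exact integrableOn_const (measure_closedBall_lt_top.ne)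
  -- the value of the derivative
  have hEq : (1/2) * (∫ x : E3, G (t, x))
      = -(∫ x : E3, (inner ℝ (ecurl (B t) x) (cross3 (Bs t x) (v t x)) : ℝ)) := by
    classical
    have hpart : ∀ (F : ℝ × E3 → ℝ), ContDiff ℝ (⊤:ℕ∞) F →
        ContDiff ℝ (⊤:ℕ∞) (fun x : E3 => F (t, x)) :=
      fun F hF => hF.comp (contDiff_const.prodMk contDiff_id)
    -- coordinatewise smoothness of the spatial fields at time t
    have sB : ∀ k, ContDiff ℝ (⊤:ℕ∞) (fun x => B t x k) := fun k => hpart (bF k) (hbFs k)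
    have sBs : ∀ k, ContDiff ℝ (⊤:ℕ∞) (fun x => Bs t x k) := fun k => hpart (bsF k) (hbsFs k)
    have sv : ∀ k, ContDiff ℝ (⊤:ℕ∞) (fun x => v t x k) :=
      fun k => hpart (fun p => v p.1 p.2 k) (contDiff_euclidean.mp hv' k)
    have sW : ∀ k, ContDiff ℝ (⊤:ℕ∞) (fun x => W x k) := fun k => by
      have h : (fun x : E3 => W x k) = fun x => wF k (t, x) :=
        funext fun x => by rw [hWdef, VF_apply]
      rw [h]; exact hpart _ (hwFs k)
    have sWs : ∀ k, ContDiff ℝ (⊤:ℕ∞) (fun x => Ws x k) := fun k => by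
      have h : (fun x : E3 => Ws x k) = fun x => wsF k (t, x) :=
        funext fun x => by rw [hWsdef, VF_apply]
      rw [h]; exact hpart _ (hwsFs k)
    -- vanishing of the spatial fields at time t
    have zW : ∀ x : E3, R < ‖x‖ → W x = 0 := by
      intro x hx
      refine PiLp.ext fun k => ?_
      have h1 : HasDerivAt (fun s => bF k (s, x)) (wF k (t, x)) t := Dt_hasDerivAt (hbFs k) t x
      have h2 : (fun s => bF k (s, x)) = fun _ => (0:ℝ) := funext fun s => by
        show B s x k = 0; rw [hBz s x hx]; rfl
      rw [h2] at h1
      have h3 := h1.unique (hasDerivAt_const t 0)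
      rw [hWdef, VF_apply, h3]; rfl
    have zWs : ∀ x : E3, R < ‖x‖ → Ws x = 0 := by
      intro x hx
      refine PiLp.ext fun k => ?_
      have h1 : HasDerivAt (fun s => bsF k (s, x)) (wsF k (t, x)) t := Dt_hasDerivAt (hbsFs k) t x
      have h2 : (fun s => bsF k (s, x)) = fun _ => (0:ℝ) := funext fun s => by
        show Bs s x k = 0; rw [hBsz s x hx]; rfl
      rw [h2] at h1
      have h3 := h1.unique (hasDerivAt_const t 0)
      rw [hWsdef, VF_apply, h3]; rfl
    -- Ws = W + curl curl W
    have hconstA : ∀ k, bsF k = fun p => bF k p + curlA (curlA bF) k p := by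
      intro k; funext p
      show Bs p.1 p.2 k = _
      rw [hconst p.1 p.2]
      have h2 : ecurl (ecurl (B p.1)) = VF (curlA (curlA bF)) p.1 := by
        rw [hcurlBVF p.1]; exact ecurl_VF hcAs p.1
      rw [PiLp.add_apply, h2, VF_apply]
    have hwsF_eq : ∀ k p, wsF k p = wF k p + curlA (curlA wF) k p := by
      intro k p
      have hDt : (fun j => Dt (bF j)) = wF := by rw [hwFdef]
      have hcw : (fun j => Dt (curlA bF j)) = curlA wF := by
        funext j q; rw [Dt_curlA hbFs j q, hDt]
      show Dt (bsF k) p = _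
      rw [hconstA k,
        Dt_add ((hbFs k).differentiable (by simp))
          ((curlA_smooth hcAs k).differentiable (by simp)),
        Dt_curlA hcAs k p, hcw, hwFdef]
    have hecurlW : ecurl W = VF (curlA wF) t := by rw [hWdef]; exact ecurl_VF hwFs t
    have hecurl2W : ecurl (ecurl W) = VF (curlA (curlA wF)) t := by
      rw [hecurlW]; exact ecurl_VF (curlA_smooth hwFs) t
    have hWseq : ∀ x, Ws x = W x + ecurl (ecurl W) x := by
      intro x
      refine PiLp.ext fun k => ?_
      rw [hWsdef, VF_apply, hwsF_eq k (t, x), PiLp.add_apply, hWdef, VF_apply, hecurl2W,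
        VF_apply]
    -- Ws is the time derivative of Bs
    have hWs_tderiv : ∀ x, tderiv Bs t x = Ws x := by
      intro x
      refine PiLp.ext fun k => ?_
      have hdiffc : DifferentiableAt ℝ (fun s => Bs s x) t :=
        ((hBs'.comp (contDiff_id.prodMk contDiff_const)).differentiable (by simp)) t
      have h1 : HasDerivAt (fun s => Bs s x) (tderiv Bs t x) t := hdiffc.hasDerivAt
      have h2' := (EuclideanSpace.proj (𝕜 := ℝ) k).hasFDerivAt.comp_hasDerivAt t h1
      have h2 : HasDerivAt (fun s => Bs s x k) (tderiv Bs t x k) t := h2'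
      have h3 : HasDerivAt (fun s => Bs s x k) (wsF k (t, x)) t := Dt_hasDerivAt (hbsFs k) t x
      rw [hWsdef, VF_apply]
      exact h2.unique h3
    -- formula for G
    have hG_eq : ∀ p, G p
        = 2*(bF 0 p * Dt (bF 0) p + bF 1 p * Dt (bF 1) p + bF 2 p * Dt (bF 2) p)
        + 2*(curlA bF 0 p * curlA wF 0 p + curlA bF 1 p * curlA wF 1 p
          + curlA bF 2 p * curlA wF 2 p) := by
      intro p
      have dbk : ∀ k, Differentiable ℝ (bF k) := fun k => (hbFs k).differentiable (by simp)
      have dck : ∀ k, Differentiable ℝ (curlA bF k) := fun k => (hcAs k).differentiable (by simp)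
      have hDt : (fun j => Dt (bF j)) = wF := by rw [hwFdef]
      show Dt eF p = _
      rw [heF_eq,
        Dt_add ((((dbk 0).fun_mul (dbk 0)).fun_add ((dbk 1).fun_mul (dbk 1))).fun_add ((dbk 2).fun_mul (dbk 2)))
          ((((dck 0).fun_mul (dck 0)).fun_add ((dck 1).fun_mul (dck 1))).fun_add ((dck 2).fun_mul (dck 2))),
        Dt_add (((dbk 0).fun_mul (dbk 0)).fun_add ((dbk 1).fun_mul (dbk 1))) ((dbk 2).fun_mul (dbk 2)),
        Dt_add ((dbk 0).fun_mul (dbk 0)) ((dbk 1).fun_mul (dbk 1)),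
        Dt_add (((dck 0).fun_mul (dck 0)).fun_add ((dck 1).fun_mul (dck 1))) ((dck 2).fun_mul (dck 2)),
        Dt_add ((dck 0).fun_mul (dck 0)) ((dck 1).fun_mul (dck 1)),
        Dt_mul (dbk 0) (dbk 0), Dt_mul (dbk 1) (dbk 1), Dt_mul (dbk 2) (dbk 2),
        Dt_mul (dck 0) (dck 0), Dt_mul (dck 1) (dck 1), Dt_mul (dck 2) (dck 2),
        Dt_curlA hbFs 0 p, Dt_curlA hbFs 1 p, Dt_curlA hbFs 2 p, hDt]
      ring
    have hGt_inner : ∀ x, G (t, x)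
        = 2 * (inner ℝ (B t x) (W x) : ℝ) + 2 * (inner ℝ (ecurl (B t) x) (ecurl W x) : ℝ) := by
      intro x
      rw [hG_eq (t, x), inner3, inner3, hcurlBVF t, hecurlW, hWdef]
      simp only [VF_apply]; rfl
    -- the fields in the induction equation
    set X : E3 → E3 := fun y => cross3 (Bs t y) (v t y - d • ecurl (B t) y) with hXdef
    set Y : E3 → E3 := fun y => cross3 (ecurl (v t) y) (ecurl (B t) y) with hYdef
    have sZ : ∀ k, ContDiff ℝ (⊤:ℕ∞) (fun x => (v t x - d • ecurl (B t) x) k) := by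
      intro k
      have h : (fun x : E3 => (v t x - d • ecurl (B t) x) k)
          = fun x => v t x k - d * ecurl (B t) x k := funext fun x => by
        rw [PiLp.sub_apply, PiLp.smul_apply, smul_eq_mul]
      rw [h]
      exact (sv k).sub (contDiff_const.mul (ecurl_coord_smooth sB k))
    have sX : ∀ k, ContDiff ℝ (⊤:ℕ∞) (fun x => X x k) := fun k => cross3_smooth sBs sZ k
    have sY : ∀ k, ContDiff ℝ (⊤:ℕ∞) (fun x => Y x k) :=
      fun k => cross3_smooth (ecurl_coord_smooth sv) (ecurl_coord_smooth sB) k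
    have zX : ∀ x : E3, R < ‖x‖ → X x = 0 := fun x hx => by
      rw [hXdef]; show cross3 (Bs t x) _ = 0; rw [hBsz t x hx]; exact cross3_zero_left _
    have zY : ∀ x : E3, R < ‖x‖ → Y x = 0 := fun x hx => by
      rw [hYdef]; show cross3 _ (ecurl (B t) x) = 0; rw [ecurl_vanish (hBz t) hx]
      exact cross3_zero_right _
    -- induction equation: Ws = -curl X - curl Y
    have hWs_ind : ∀ x, Ws x = -(ecurl X x) - ecurl Y x := by
      intro x
      have h := hind t x
      rw [hWs_tderiv x] at h
      have : Ws x + ecurl X x = -(ecurl Y x) := eq_neg_of_add_eq_zero_left h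
      have h2 : Ws x = -(ecurl Y x) - ecurl X x := eq_sub_of_add_eq this
      rw [h2]; abel
    -- integrability of all the pairings
    have cB : ∀ k, Continuous fun x => B t x k := fun k => (sB k).continuous
    have cBs : ∀ k, Continuous fun x => Bs t x k := fun k => (sBs k).continuous
    have cW : ∀ k, Continuous fun x => W x k := fun k => (sW k).continuous
    have cCf : ∀ k, Continuous fun x => ecurl (B t) x k :=
      fun k => (ecurl_coord_smooth sB k).continuous
    have cCW : ∀ k, Continuous fun x => ecurl W x k :=
      fun k => (ecurl_coord_smooth sW k).continuous
    have cC2W : ∀ k, Continuous fun x => ecurl (ecurl W) x k :=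
      fun k => (ecurl_coord_smooth (ecurl_coord_smooth sW) k).continuous
    have cCX : ∀ k, Continuous fun x => ecurl X x k :=
      fun k => (ecurl_coord_smooth sX k).continuous
    have cCY : ∀ k, Continuous fun x => ecurl Y x k :=
      fun k => (ecurl_coord_smooth sY k).continuous
    have cX : ∀ k, Continuous fun x => X x k := fun k => (sX k).continuous
    have cY : ∀ k, Continuous fun x => Y x k := fun k => (sY k).continuous
    have int1 : Integrable fun x : E3 => (inner ℝ (B t x) (W x) : ℝ) :=
      integrable_inner (c := R) cB cW zW
    have int2 : Integrable fun x : E3 => (inner ℝ (ecurl (B t) x) (ecurl W x) : ℝ) :=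
      integrable_inner (c := R) cCf cCW (fun x hx => ecurl_vanish zW hx)
    have int3 : Integrable fun x : E3 => (inner ℝ (B t x) (ecurl (ecurl W) x) : ℝ) :=
      integrable_inner (c := R) cB cC2W (fun x hx => ecurl_vanish (fun y hy => ecurl_vanish zW hy) hx)
    have int4 : Integrable fun x : E3 => (inner ℝ (B t x) (ecurl X x) : ℝ) :=
      integrable_inner (c := R) cB cCX (fun x hx => ecurl_vanish zX hx)
    have int5 : Integrable fun x : E3 => (inner ℝ (B t x) (ecurl Y x) : ℝ) :=
      integrable_inner (c := R) cB cCY (fun x hx => ecurl_vanish zY hx)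
    have int6 : Integrable fun x : E3 => (inner ℝ (ecurl (B t) x) (X x) : ℝ) :=
      integrable_inner (c := R) cCf cX zX
    have int7 : Integrable fun x : E3 => (inner ℝ (ecurl (B t) x) (Y x) : ℝ) :=
      integrable_inner (c := R) cCf cY zY
    -- step 1 : ∫ G t = 2 I1 + 2 I2
    have e1 : (∫ x : E3, G (t, x))
        = 2 * (∫ x : E3, (inner ℝ (B t x) (W x) : ℝ))
          + 2 * (∫ x : E3, (inner ℝ (ecurl (B t) x) (ecurl W x) : ℝ)) := by
      rw [show (fun x : E3 => G (t, x)) = fun x =>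
          2 * (inner ℝ (B t x) (W x) : ℝ) + 2 * (inner ℝ (ecurl (B t) x) (ecurl W x) : ℝ) from
        funext hGt_inner]
      rw [integral_add (int1.const_mul 2) (int2.const_mul 2), integral_const_mul,
        integral_const_mul]
    -- step 2 : I2 = ∫ ⟪B t, curl curl W⟫  (integration by parts)
    have e2 : (∫ x : E3, (inner ℝ (ecurl (B t) x) (ecurl W x) : ℝ))
        = ∫ x : E3, (inner ℝ (B t x) (ecurl (ecurl W) x) : ℝ) :=
      integral_inner_curl hR (B t) (ecurl W) sB (ecurl_coord_smooth sW) (hBz t)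
        (fun x hx => ecurl_vanish zW hx)
    -- step 3 : I1 + I2 = ∫ ⟪B t, Ws⟫
    have e3 : (∫ x : E3, (inner ℝ (B t x) (Ws x) : ℝ))
        = (∫ x : E3, (inner ℝ (B t x) (W x) : ℝ))
          + (∫ x : E3, (inner ℝ (ecurl (B t) x) (ecurl W x) : ℝ)) := by
      rw [show (fun x : E3 => (inner ℝ (B t x) (Ws x) : ℝ)) = fun x =>
          (inner ℝ (B t x) (W x) : ℝ) + (inner ℝ (B t x) (ecurl (ecurl W) x) : ℝ) from
        funext fun x => by rw [hWseq x, inner_add_right]]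
      rw [integral_add int1 int3, e2]
    -- step 4 : ∫ ⟪B t, Ws⟫ = -(∫ ⟪curl B, X⟫ + ∫ ⟪curl B, Y⟫)
    have e4 : (∫ x : E3, (inner ℝ (B t x) (Ws x) : ℝ))
        = -((∫ x : E3, (inner ℝ (ecurl (B t) x) (X x) : ℝ))
            + (∫ x : E3, (inner ℝ (ecurl (B t) x) (Y x) : ℝ))) := by
      rw [show (fun x : E3 => (inner ℝ (B t x) (Ws x) : ℝ)) = fun x =>
          -(inner ℝ (B t x) (ecurl X x) : ℝ) - (inner ℝ (B t x) (ecurl Y x) : ℝ) from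
        funext fun x => by rw [hWs_ind x, inner_sub_right, inner_neg_right]]
      have int4' : Integrable fun x : E3 => -(inner ℝ (B t x) (ecurl X x) : ℝ) := int4.neg
      rw [integral_sub int4' int5, integral_neg,
        ← integral_inner_curl hR (B t) X sB sX (hBz t) zX,
        ← integral_inner_curl hR (B t) Y sB sY (hBz t) zY]
      ring
    -- step 5 : pointwise vector algebra
    have e5 : (∫ x : E3, (inner ℝ (ecurl (B t) x) (X x) : ℝ))
        + (∫ x : E3, (inner ℝ (ecurl (B t) x) (Y x) : ℝ))
        = ∫ x : E3, (inner ℝ (ecurl (B t) x) (cross3 (Bs t x) (v t x)) : ℝ) := by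
      rw [← integral_add int6 int7]
      congr 1
      funext x
      rw [hXdef, hYdef]
      show (inner ℝ (ecurl (B t) x) (cross3 (Bs t x) (v t x - d • ecurl (B t) x)) : ℝ)
          + (inner ℝ (ecurl (B t) x) (cross3 (ecurl (v t) x) (ecurl (B t) x)) : ℝ) = _
      rw [inner3, inner3, inner3]
      simp only [cross3, mk3_zero, mk3_one, mk3_two, PiLp.sub_apply, PiLp.smul_apply,
        smul_eq_mul]
      ring
    rw [e1]
    have efin : (∫ x : E3, (inner ℝ (B t x) (W x) : ℝ))
        + (∫ x : E3, (inner ℝ (ecurl (B t) x) (ecurl W x) : ℝ))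
        = -(∫ x : E3, (inner ℝ (ecurl (B t) x) (cross3 (Bs t x) (v t x)) : ℝ)) := by
      rw [← e3, e4, e5]
    linarith [efin]
  have := (hder.const_mul (1/2 : ℝ))
  rw [hEq] at this
  exact this
end
end

section
/- Let d ≥ 0 and let v, A, A* : ℝ × ℝ³ → ℝ³ and p, e : ℝ × ℝ³ → ℝ be smooth, such that for every time t: div v(t,·) = 0, div A(t,·) = 0, div A*(t,·) = 0, A* = A − ΔA (componentwise Laplacian in x), and the incompressible potential equations hold pointwise: ∂ₜv + (v·∇)v + ∇p − (A* − A) × (curl A*) = 0 and ∂ₜA* − (v − d·(A* − A)) × (curl A*) − (A* − A) × (curl v) + ∇e = 0. Define B* := curl A* and B := curl A. Then for every t: div B(t,·) = 0, div B*(t,·) = 0, B* = B + curl(curl B), A* − A = curl B, and (v, B*, B, p) solves incompressible extended MHD: ∂ₜv + (v·∇)v + ∇p + B* × (curl B) = 0 and ∂ₜB* + curl(B* × (v − d·curl B)) + curl((curl v) × (curl B)) = 0. -/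
noncomputable section

open MeasureTheory Real

abbrev P : Type := ℝ × E3

def e3 (i : Fin 3) : E3 := EuclideanSpace.single i 1

-- L1': pd of a slice of a differentiable function on ℝ × E3
lemma pd_slice {c : P → ℝ} (hc : Differentiable ℝ c) (t : ℝ) (x : E3) (i : Fin 3) :
    pd i (fun y => c (t, y)) x = fderiv ℝ c (t, x) (0, e3 i) := by
  have h1 : HasFDerivAt (fun y : E3 => (t, y)) (ContinuousLinearMap.inr ℝ ℝ E3) x :=
    (hasFDerivAt_const t x).prodMk (hasFDerivAt_id x)
  have h2 : HasFDerivAt (fun y : E3 => c (t, y))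
      (((fderiv ℝ c (t, x)).comp (ContinuousLinearMap.inr ℝ ℝ E3))) x :=
    ((hc (t, x)).hasFDerivAt).comp x h1
  rw [pd, h2.fderiv]
  rfl

lemma deriv_slice {c : P → ℝ} (hc : Differentiable ℝ c) (t : ℝ) (x : E3) :
    deriv (fun s => c (s, x)) t = fderiv ℝ c (t, x) (1, 0) := by
  have h1 : HasFDerivAt (fun s : ℝ => (s, x)) (ContinuousLinearMap.inl ℝ ℝ E3) t :=
    (hasFDerivAt_id t).prodMk (hasFDerivAt_const x t)
  have h2 : HasFDerivAt (fun s : ℝ => c (s, x))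
      (((fderiv ℝ c (t, x)).comp (ContinuousLinearMap.inl ℝ ℝ E3))) t :=
    ((hc (t, x)).hasFDerivAt).comp t h1
  rw [h2.hasDerivAt.deriv]
  rfl

-- Fder
def Fder (F : P → ℝ) (u : P) : P → ℝ := fun z => fderiv ℝ F z u

lemma Fder_smooth {F : P → ℝ} (hF : ContDiff ℝ (⊤ : ℕ∞) F) (u : P) : ContDiff ℝ (⊤ : ℕ∞) (Fder F u) :=
  (hF.fderiv_right (by simp)).clm_apply contDiff_const

-- symmetry of second derivative
lemma fder_symm {F : P → ℝ} (hF : ContDiff ℝ (⊤ : ℕ∞) F) (z : P) (u w : P) :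
    fderiv ℝ (Fder F u) z w = fderiv ℝ (Fder F w) z u := by
  have hd : Differentiable ℝ (fderiv ℝ F) := (hF.fderiv_right (m := (⊤ : ℕ∞)) (by simp)).differentiable (by simp)
  have hsymm := (hF.contDiffAt (x := z)).isSymmSndFDerivAt (by rw [minSmoothness_of_isRCLikeNormedField]; exact WithTop.coe_le_coe.mpr le_top)
  have h1 : fderiv ℝ (Fder F u) z = (fderiv ℝ (fderiv ℝ F) z).flip u := by
    unfold Fder
    rw [fderiv_clm_apply (hd z) (differentiableAt_const u)]
    simp only [fderiv_const, fderiv_const_apply, Pi.zero_apply, ContinuousLinearMap.comp_zero, zero_add]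
  have h2 : fderiv ℝ (Fder F w) z = (fderiv ℝ (fderiv ℝ F) z).flip w := by
    unfold Fder
    rw [fderiv_clm_apply (hd z) (differentiableAt_const w)]
    simp only [fderiv_const, fderiv_const_apply, Pi.zero_apply, ContinuousLinearMap.comp_zero, zero_add]
  rw [h1, h2]
  simpa using hsymm w u

-- slices
lemma slice_smooth {F : P → ℝ} (hF : ContDiff ℝ (⊤ : ℕ∞) F) (t : ℝ) :
    ContDiff ℝ (⊤ : ℕ∞) (fun y : E3 => F (t, y)) :=
  hF.comp (contDiff_const.prodMk contDiff_id)

lemma tslice_smooth {F : P → ℝ} (hF : ContDiff ℝ (⊤ : ℕ∞) F) (x : E3) :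
    ContDiff ℝ (⊤ : ℕ∞) (fun s : ℝ => F (s, x)) :=
  hF.comp (contDiff_id.prodMk contDiff_const)

lemma pd_congr {f g : E3 → ℝ} (h : ∀ y, f y = g y) (i : Fin 3) (x : E3) :
    pd i f x = pd i g x := by
  have : f = g := funext h
  rw [this]

lemma deriv_congr {f g : ℝ → ℝ} (h : ∀ s, f s = g s) (t : ℝ) : deriv f t = deriv g t := by
  have : f = g := funext h
  rw [this]

lemma pd_add {f g : E3 → ℝ} {x : E3} (hf : DifferentiableAt ℝ f x)
    (hg : DifferentiableAt ℝ g x) (i : Fin 3) :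
    pd i (fun y => f y + g y) x = pd i f x + pd i g x := by
  simp only [pd, fderiv_fun_add hf hg]; rfl

lemma pd_neg {f : E3 → ℝ} {x : E3} (i : Fin 3) :
    pd i (fun y => -f y) x = -pd i f x := by
  simp only [pd, fderiv_fun_neg]; rfl

-- rewriting pd slices as Fder slices
lemma pd_slice_eq {F : P → ℝ} (hF : ContDiff ℝ (⊤ : ℕ∞) F) (t : ℝ) (j : Fin 3) (y : E3) :
    pd j (fun y' => F (t, y')) y = Fder F (0, e3 j) (t, y) :=
  pd_slice (hF.differentiable (by simp)) t y j

lemma deriv_slice_eq {F : P → ℝ} (hF : ContDiff ℝ (⊤ : ℕ∞) F) (t : ℝ) (y : E3) :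
    deriv (fun s => F (s, y)) t = Fder F (1, 0) (t, y) :=
  deriv_slice (hF.differentiable (by simp)) t y

-- differentiability facts
lemma diff_slice {F : P → ℝ} (hF : ContDiff ℝ (⊤ : ℕ∞) F) (t : ℝ) :
    Differentiable ℝ (fun y : E3 => F (t, y)) :=
  (slice_smooth hF t).differentiable (by simp)

lemma diff_pd_slice {F : P → ℝ} (hF : ContDiff ℝ (⊤ : ℕ∞) F) (t : ℝ) (j : Fin 3) :
    Differentiable ℝ (fun y => pd j (fun y' => F (t, y')) y) := by
  have : (fun y => pd j (fun y' => F (t, y')) y) = fun y => Fder F (0, e3 j) (t, y) :=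
    funext fun y => pd_slice_eq hF t j y
  rw [this]
  exact diff_slice (Fder_smooth hF _) t

lemma diff_time_pd {F : P → ℝ} (hF : ContDiff ℝ (⊤ : ℕ∞) F) (x : E3) (i : Fin 3) :
    Differentiable ℝ (fun s => pd i (fun y => F (s, y)) x) := by
  have : (fun s => pd i (fun y => F (s, y)) x) = fun s => Fder F (0, e3 i) (s, x) :=
    funext fun s => pd_slice_eq hF s i x
  rw [this]
  exact ((Fder_smooth hF _).differentiable (by simp)).comp
    ((differentiable_id.prodMk (differentiable_const x)))

lemma diff_time_slice {F : P → ℝ} (hF : ContDiff ℝ (⊤ : ℕ∞) F) (x : E3) :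
    Differentiable ℝ (fun s => F (s, x)) :=
  (tslice_smooth hF x).differentiable (by simp)

-- swap lemmas
lemma pd_pd_swap {F : P → ℝ} (hF : ContDiff ℝ (⊤ : ℕ∞) F) (t : ℝ) (x : E3) (i j : Fin 3) :
    pd i (fun y => pd j (fun y' => F (t, y')) y) x
      = pd j (fun y => pd i (fun y' => F (t, y')) y) x := by
  have hdF : ∀ u : P, Differentiable ℝ (Fder F u) := fun u =>
    (Fder_smooth hF u).differentiable (by simp)
  calc pd i (fun y => pd j (fun y' => F (t, y')) y) x
      = pd i (fun y => Fder F (0, e3 j) (t, y)) x :=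
        pd_congr (fun y => pd_slice_eq hF t j y) i x
    _ = fderiv ℝ (Fder F (0, e3 j)) (t, x) (0, e3 i) := pd_slice (hdF _) t x i
    _ = fderiv ℝ (Fder F (0, e3 i)) (t, x) (0, e3 j) := fder_symm hF _ _ _
    _ = pd j (fun y => Fder F (0, e3 i) (t, y)) x := (pd_slice (hdF _) t x j).symm
    _ = pd j (fun y => pd i (fun y' => F (t, y')) y) x :=
        pd_congr (fun y => (pd_slice_eq hF t i y).symm) j x

lemma pd_deriv_swap {F : P → ℝ} (hF : ContDiff ℝ (⊤ : ℕ∞) F) (t : ℝ) (x : E3) (i : Fin 3) :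
    pd i (fun y => deriv (fun s => F (s, y)) t) x
      = deriv (fun s => pd i (fun y => F (s, y)) x) t := by
  have hdF : ∀ u : P, Differentiable ℝ (Fder F u) := fun u =>
    (Fder_smooth hF u).differentiable (by simp)
  calc pd i (fun y => deriv (fun s => F (s, y)) t) x
      = pd i (fun y => Fder F (1, 0) (t, y)) x :=
        pd_congr (fun y => deriv_slice_eq hF t y) i x
    _ = fderiv ℝ (Fder F (1, 0)) (t, x) (0, e3 i) := pd_slice (hdF _) t x i
    _ = fderiv ℝ (Fder F (0, e3 i)) (t, x) (1, 0) := fder_symm hF _ _ _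
    _ = deriv (fun s => Fder F (0, e3 i) (s, x)) t := (deriv_slice (hdF _) t x).symm
    _ = deriv (fun s => pd i (fun y => F (s, y)) x) t :=
        deriv_congr (fun s => (pd_slice_eq hF s i x).symm) t

-- components of vector fields
lemma comp_smooth {f : ℝ → E3 → E3} (hf : ContDiff ℝ (⊤ : ℕ∞) ↿f) (j : Fin 3) :
    ContDiff ℝ (⊤ : ℕ∞) (fun z : P => f z.1 z.2 j) :=
  (EuclideanSpace.proj (𝕜 := ℝ) j).contDiff.comp hf

-- deriv/differentiability through coordinates
lemma deriv_pi3 {f : ℝ → E3} {t : ℝ} (hf : DifferentiableAt ℝ f t) (i : Fin 3) :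
    deriv (fun s => f s i) t = deriv f t i := by
  have h := ((EuclideanSpace.proj (𝕜 := ℝ) i).hasFDerivAt.comp_hasDerivAt t hf.hasDerivAt)
  simpa [Function.comp_def] using h.deriv

lemma diff_pi3 {f : ℝ → E3} {t : ℝ} (h : ∀ i, DifferentiableAt ℝ (fun s => f s i) t) :
    DifferentiableAt ℝ f t := by
  have h2 : DifferentiableAt ℝ (fun s i => f s i) t := differentiableAt_pi.2 h
  exact ((PiLp.continuousLinearEquiv 2 ℝ (fun _ : Fin 3 => ℝ)).symm.differentiableAt.comp t h2)

-- wrappers for time-dependent vector fields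
section fieldlemmas
variable {f : ℝ → E3 → E3}

lemma pdf_swap (hf : ContDiff ℝ (⊤ : ℕ∞) ↿f) (t : ℝ) (x : E3) (i j k : Fin 3) :
    pd i (fun y => pd j (fun y' => f t y' k) y) x
      = pd j (fun y => pd i (fun y' => f t y' k) y) x :=
  pd_pd_swap (comp_smooth hf k) t x i j

lemma pdf_deriv_swap (hf : ContDiff ℝ (⊤ : ℕ∞) ↿f) (t : ℝ) (x : E3) (i k : Fin 3) :
    pd i (fun y => deriv (fun s => f s y k) t) x
      = deriv (fun s => pd i (fun y => f s y k) x) t :=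
  pd_deriv_swap (comp_smooth hf k) t x i

lemma pdf_diff (hf : ContDiff ℝ (⊤ : ℕ∞) ↿f) (t : ℝ) (k : Fin 3) : Differentiable ℝ (fun y => f t y k) :=
  diff_slice (comp_smooth hf k) t

lemma pdf_pd_diff (hf : ContDiff ℝ (⊤ : ℕ∞) ↿f) (t : ℝ) (j k : Fin 3) :
    Differentiable ℝ (fun y => pd j (fun y' => f t y' k) y) :=
  diff_pd_slice (comp_smooth hf k) t j

lemma pdf_time_diff (hf : ContDiff ℝ (⊤ : ℕ∞) ↿f) (x : E3) (k : Fin 3) : Differentiable ℝ (fun s => f s x k) :=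
  diff_time_slice (comp_smooth hf k) x

lemma pdf_time_pd_diff (hf : ContDiff ℝ (⊤ : ℕ∞) ↿f) (x : E3) (i k : Fin 3) :
    Differentiable ℝ (fun s => pd i (fun y => f s y k) x) :=
  diff_time_pd (comp_smooth hf k) x i

lemma pdf_pd_pd_diff (hf : ContDiff ℝ (⊤ : ℕ∞) ↿f) (t : ℝ) (i j k : Fin 3) :
    Differentiable ℝ (fun y => pd i (fun z => pd j (fun w => f t w k) z) y) := by
  have h : (fun z => pd j (fun w => f t w k) z)
      = fun z => Fder (fun q : P => f q.1 q.2 k) (0, e3 j) (t, z) :=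
    funext fun z => pd_slice_eq (comp_smooth hf k) t j z
  rw [h]
  exact diff_pd_slice (Fder_smooth (comp_smooth hf k) _) t i

lemma diff_pd_curlcomp (hf : ContDiff ℝ (⊤ : ℕ∞) ↿f) (t : ℝ) (a b : Fin 3) :
    Differentiable ℝ (fun y => pd a (fun z => ecurl (f t) z b) y) := by
  have key : ∀ (c₁ k₁ c₂ k₂ : Fin 3),
      Differentiable ℝ (fun y => pd a (fun z =>
        pd c₁ (fun w => f t w k₁) z - pd c₂ (fun w => f t w k₂) z) y) := by
    intro c₁ k₁ c₂ k₂
    have h : ∀ y, pd a (fun z =>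
        pd c₁ (fun w => f t w k₁) z - pd c₂ (fun w => f t w k₂) z) y
        = pd a (fun z => pd c₁ (fun w => f t w k₁) z) y
          - pd a (fun z => pd c₂ (fun w => f t w k₂) z) y :=
      fun y => pd_sub ((pdf_pd_diff hf t c₁ k₁) y) ((pdf_pd_diff hf t c₂ k₂) y) a
    rw [funext h]
    exact (pdf_pd_pd_diff hf t a c₁ k₁).sub (pdf_pd_pd_diff hf t a c₂ k₂)
  fin_cases b
  · exact key 1 2 2 1
  · exact key 2 0 0 2
  · exact key 0 1 1 0

lemma ediv_curl_zero (hf : ContDiff ℝ (⊤ : ℕ∞) ↿f) (t : ℝ) (g : E3 → E3)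
    (hg : ∀ y, g y = ecurl (f t) y) (x : E3) : ediv g x = 0 := by
  have e0 : pd 0 (fun y => g y 0) x
      = pd 0 (fun y => pd 1 (fun z => f t z 2) y) x
        - pd 0 (fun y => pd 2 (fun z => f t z 1) y) x := by
    rw [pd_congr (f := fun y => g y 0)
      (g := fun y => pd 1 (fun z => f t z 2) y - pd 2 (fun z => f t z 1) y)
      (fun y => by simp only [hg y]; rfl) 0 x]
    exact pd_sub ((pdf_pd_diff hf t 1 2) x) ((pdf_pd_diff hf t 2 1) x) 0
  have e1 : pd 1 (fun y => g y 1) x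
      = pd 1 (fun y => pd 2 (fun z => f t z 0) y) x
        - pd 1 (fun y => pd 0 (fun z => f t z 2) y) x := by
    rw [pd_congr (f := fun y => g y 1)
      (g := fun y => pd 2 (fun z => f t z 0) y - pd 0 (fun z => f t z 2) y)
      (fun y => by simp only [hg y]; rfl) 1 x]
    exact pd_sub ((pdf_pd_diff hf t 2 0) x) ((pdf_pd_diff hf t 0 2) x) 1
  have e2 : pd 2 (fun y => g y 2) x
      = pd 2 (fun y => pd 0 (fun z => f t z 1) y) x
        - pd 2 (fun y => pd 1 (fun z => f t z 0) y) x := by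
    rw [pd_congr (f := fun y => g y 2)
      (g := fun y => pd 0 (fun z => f t z 1) y - pd 1 (fun z => f t z 0) y)
      (fun y => by simp only [hg y]; rfl) 2 x]
    exact pd_sub ((pdf_pd_diff hf t 0 1) x) ((pdf_pd_diff hf t 1 0) x) 2
  have s1 := pdf_swap hf t x 0 1 2
  have s2 := pdf_swap hf t x 0 2 1
  have s3 := pdf_swap hf t x 1 2 0
  rw [ediv, e0, e1, e2]
  linarith

end fieldlemmas

lemma cross3_antisymm (u w : E3) : cross3 u w = -cross3 w u := by
  ext k
  fin_cases k <;> simp [cross3, mk3] <;> ring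


/-- The incompressible potential formulation implies the incompressible
extended MHD system: from the potential equations on `(v, A*, A)` with `A* = A − ΔA`, the
fields `B* = curl A*`, `B = curl A` are solenoidal, satisfy `B* = B + curl curl B`,
`A* − A = curl B`, and `(v, B*, B, p)` solves incompressible extended MHD. -/
theorem potential_formulation_implies_XMHD
    (d : ℝ) (hd : 0 ≤ d)
    (v A As : ℝ → E3 → E3) (p e : ℝ → E3 → ℝ)
    (hv : ContDiff ℝ (⊤ : ℕ∞) ↿v) (hA : ContDiff ℝ (⊤ : ℕ∞) ↿A) (hAs : ContDiff ℝ (⊤ : ℕ∞) ↿As)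
    (hp : ContDiff ℝ (⊤ : ℕ∞) ↿p) (he : ContDiff ℝ (⊤ : ℕ∞) ↿e)
    (hdiv_v : ∀ t x, ediv (v t) x = 0)
    (hdiv_A : ∀ t x, ediv (A t) x = 0)
    (hdiv_As : ∀ t x, ediv (As t) x = 0)
    (hAA : ∀ t x, As t x = A t x - elap (A t) x)
    (hmom : ∀ t x,
      tderiv v t x + advect (v t x) (v t) x + egrad (p t) x
        - cross3 (As t x - A t x) (ecurl (As t) x) = 0)
    (hpot : ∀ t x,
      tderiv As t x - cross3 (v t x - d • (As t x - A t x)) (ecurl (As t) x)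
        - cross3 (As t x - A t x) (ecurl (v t) x) + egrad (e t) x = 0)
    (B Bs : ℝ → E3 → E3)
    (hB : ∀ t x, B t x = ecurl (A t) x) (hBs : ∀ t x, Bs t x = ecurl (As t) x) :
    (∀ t x, ediv (B t) x = 0) ∧
    (∀ t x, ediv (Bs t) x = 0) ∧
    (∀ t x, Bs t x = B t x + ecurl (ecurl (B t)) x) ∧
    (∀ t x, As t x - A t x = ecurl (B t) x) ∧
    (∀ t x, tderiv v t x + advect (v t x) (v t) x + egrad (p t) x
        + cross3 (Bs t x) (ecurl (B t) x) = 0) ∧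
    (∀ t x, tderiv Bs t x
        + ecurl (fun y => cross3 (Bs t y) (v t y - d • ecurl (B t) y)) x
        + ecurl (fun y => cross3 (ecurl (v t) y) (ecurl (B t) y)) x = 0) := by
  -- Statement 4 : As - A = curl B
  have st4 : ∀ t x, As t x - A t x = ecurl (B t) x := by
    intro t x
    have hdA : ∀ y : E3, pd 0 (fun z => A t z 0) y + pd 1 (fun z => A t z 1) y
        + pd 2 (fun z => A t z 2) y = 0 := fun y => hdiv_A t y
    have key : ∀ i : Fin 3, pd i (fun y => pd 0 (fun z => A t z 0) y) x
        = - pd i (fun y => pd 1 (fun z => A t z 1) y) x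
          - pd i (fun y => pd 2 (fun z => A t z 2) y) x := by
      intro i
      have h : ∀ y : E3, pd 0 (fun z => A t z 0) y
          = - pd 1 (fun z => A t z 1) y - pd 2 (fun z => A t z 2) y := fun y => by
        linarith [hdA y]
      calc pd i (fun y => pd 0 (fun z => A t z 0) y) x
          = pd i (fun y => -pd 1 (fun z => A t z 1) y - pd 2 (fun z => A t z 2) y) x :=
            pd_congr h i x
        _ = pd i (fun y => -pd 1 (fun z => A t z 1) y) x
            - pd i (fun y => pd 2 (fun z => A t z 2) y) x :=
            pd_sub (((pdf_pd_diff hA t 1 1).neg) x) ((pdf_pd_diff hA t 2 2) x) i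
        _ = - pd i (fun y => pd 1 (fun z => A t z 1) y) x
            - pd i (fun y => pd 2 (fun z => A t z 2) y) x := by rw [pd_neg]
    have hlap : ∀ k : Fin 3, As t x k - A t x k
        = -(pd 0 (fun y => pd 0 (fun z => A t z k) y) x
            + pd 1 (fun y => pd 1 (fun z => A t z k) y) x
            + pd 2 (fun y => pd 2 (fun z => A t z k) y) x) := by
      intro k
      rw [hAA t x]
      have h3 : (A t x - elap (A t) x) k = A t x k - elap (A t) x k := rfl
      rw [h3]
      have h4 : ∀ m : Fin 3, elap (A t) x m
          = pd 0 (fun y => pd 0 (fun z => A t z m) y) x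
            + pd 1 (fun y => pd 1 (fun z => A t z m) y) x
            + pd 2 (fun y => pd 2 (fun z => A t z m) y) x := by
        intro m
        have hm : elap (A t) x m = ∑ i, pd i (fun y => pd i (fun z => A t z m) y) x := by
          fin_cases m <;> rfl
        rw [hm, Fin.sum_univ_three]
      fin_cases k <;> rw [h4] <;> ring
    ext k
    fin_cases k
    · show As t x 0 - A t x 0
        = pd 1 (fun y => B t y 2) x - pd 2 (fun y => B t y 1) x
      have hrw1 : pd 1 (fun y => B t y 2) x
          = pd 1 (fun y => pd 0 (fun z => A t z 1) y) x
            - pd 1 (fun y => pd 1 (fun z => A t z 0) y) x := by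
        calc pd 1 (fun y => B t y 2) x
            = pd 1 (fun y => pd 0 (fun z => A t z 1) y - pd 1 (fun z => A t z 0) y) x :=
              pd_congr (fun y => by rw [hB t y]; rfl) 1 x
          _ = _ := pd_sub ((pdf_pd_diff hA t 0 1) x) ((pdf_pd_diff hA t 1 0) x) 1
      have hrw2 : pd 2 (fun y => B t y 1) x
          = pd 2 (fun y => pd 2 (fun z => A t z 0) y) x
            - pd 2 (fun y => pd 0 (fun z => A t z 2) y) x := by
        calc pd 2 (fun y => B t y 1) x
            = pd 2 (fun y => pd 2 (fun z => A t z 0) y - pd 0 (fun z => A t z 2) y) x :=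
              pd_congr (fun y => by rw [hB t y]; rfl) 2 x
          _ = _ := pd_sub ((pdf_pd_diff hA t 2 0) x) ((pdf_pd_diff hA t 0 2) x) 2
      rw [hrw1, hrw2]
      have s1 := pdf_swap hA t x 1 0 1
      have s2 := pdf_swap hA t x 2 0 2
      linarith [hlap 0, key 0, s1, s2]
    · show As t x 1 - A t x 1
        = pd 2 (fun y => B t y 0) x - pd 0 (fun y => B t y 2) x
      have hrw1 : pd 2 (fun y => B t y 0) x
          = pd 2 (fun y => pd 1 (fun z => A t z 2) y) x
            - pd 2 (fun y => pd 2 (fun z => A t z 1) y) x := by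
        calc pd 2 (fun y => B t y 0) x
            = pd 2 (fun y => pd 1 (fun z => A t z 2) y - pd 2 (fun z => A t z 1) y) x :=
              pd_congr (fun y => by rw [hB t y]; rfl) 2 x
          _ = _ := pd_sub ((pdf_pd_diff hA t 1 2) x) ((pdf_pd_diff hA t 2 1) x) 2
      have hrw2 : pd 0 (fun y => B t y 2) x
          = pd 0 (fun y => pd 0 (fun z => A t z 1) y) x
            - pd 0 (fun y => pd 1 (fun z => A t z 0) y) x := by
        calc pd 0 (fun y => B t y 2) x
            = pd 0 (fun y => pd 0 (fun z => A t z 1) y - pd 1 (fun z => A t z 0) y) x :=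
              pd_congr (fun y => by rw [hB t y]; rfl) 0 x
          _ = _ := pd_sub ((pdf_pd_diff hA t 0 1) x) ((pdf_pd_diff hA t 1 0) x) 0
      rw [hrw1, hrw2]
      have s1 := pdf_swap hA t x 2 1 2
      have s2 := pdf_swap hA t x 0 1 0
      linarith [hlap 1, key 1, s1, s2]
    · show As t x 2 - A t x 2
        = pd 0 (fun y => B t y 1) x - pd 1 (fun y => B t y 0) x
      have hrw1 : pd 0 (fun y => B t y 1) x
          = pd 0 (fun y => pd 2 (fun z => A t z 0) y) x
            - pd 0 (fun y => pd 0 (fun z => A t z 2) y) x := by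
        calc pd 0 (fun y => B t y 1) x
            = pd 0 (fun y => pd 2 (fun z => A t z 0) y - pd 0 (fun z => A t z 2) y) x :=
              pd_congr (fun y => by rw [hB t y]; rfl) 0 x
          _ = _ := pd_sub ((pdf_pd_diff hA t 2 0) x) ((pdf_pd_diff hA t 0 2) x) 0
      have hrw2 : pd 1 (fun y => B t y 0) x
          = pd 1 (fun y => pd 1 (fun z => A t z 2) y) x
            - pd 1 (fun y => pd 2 (fun z => A t z 1) y) x := by
        calc pd 1 (fun y => B t y 0) x
            = pd 1 (fun y => pd 1 (fun z => A t z 2) y - pd 2 (fun z => A t z 1) y) x :=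
              pd_congr (fun y => by rw [hB t y]; rfl) 1 x
          _ = _ := pd_sub ((pdf_pd_diff hA t 1 2) x) ((pdf_pd_diff hA t 2 1) x) 1
      rw [hrw1, hrw2]
      have s1 := pdf_swap hA t x 0 2 0
      have s2 := pdf_swap hA t x 1 2 1
      linarith [hlap 2, key 2, s1, s2]
  -- differentiability of curl B components
  have hdcurlB : ∀ (t : ℝ) (j : Fin 3), Differentiable ℝ (fun y => ecurl (B t) y j) := by
    intro t j
    have h0 : (fun z => B t z 0) = fun z => ecurl (A t) z 0 := funext fun z => by rw [hB t z]
    have h1 : (fun z => B t z 1) = fun z => ecurl (A t) z 1 := funext fun z => by rw [hB t z]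
    have h2 : (fun z => B t z 2) = fun z => ecurl (A t) z 2 := funext fun z => by rw [hB t z]
    fin_cases j
    · show Differentiable ℝ (fun y => pd 1 (fun z => B t z 2) y - pd 2 (fun z => B t z 1) y)
      rw [h2, h1]
      exact (diff_pd_curlcomp hA t 1 2).sub (diff_pd_curlcomp hA t 2 1)
    · show Differentiable ℝ (fun y => pd 2 (fun z => B t z 0) y - pd 0 (fun z => B t z 2) y)
      rw [h0, h2]
      exact (diff_pd_curlcomp hA t 2 0).sub (diff_pd_curlcomp hA t 0 2)
    · show Differentiable ℝ (fun y => pd 0 (fun z => B t z 1) y - pd 1 (fun z => B t z 0) y)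
      rw [h1, h0]
      exact (diff_pd_curlcomp hA t 0 1).sub (diff_pd_curlcomp hA t 1 0)
  -- Statement 3
  have st3 : ∀ t x, Bs t x = B t x + ecurl (ecurl (B t)) x := by
    intro t x
    have hAsum : ∀ (y : E3) (k : Fin 3), As t y k = A t y k + ecurl (B t) y k := by
      intro y k
      have h : As t y = A t y + ecurl (B t) y := by rw [← st4 t y]; abel
      rw [h]; rfl
    have hadd : ∀ (a b : Fin 3), pd a (fun y => As t y b) x
        = pd a (fun y => A t y b) x + pd a (fun y => ecurl (B t) y b) x := by
      intro a b
      calc pd a (fun y => As t y b) x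
          = pd a (fun y => A t y b + ecurl (B t) y b) x :=
            pd_congr (fun y => hAsum y b) a x
        _ = _ := pd_add ((pdf_diff hA t b) x) ((hdcurlB t b) x) a
    ext k
    fin_cases k
    · show Bs t x 0 = B t x 0 + (pd 1 (fun y => ecurl (B t) y 2) x
          - pd 2 (fun y => ecurl (B t) y 1) x)
      have hL : Bs t x 0 = pd 1 (fun y => As t y 2) x - pd 2 (fun y => As t y 1) x := by
        rw [hBs t x]; rfl
      have hR : B t x 0 = pd 1 (fun y => A t y 2) x - pd 2 (fun y => A t y 1) x := by
        rw [hB t x]; rfl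
      rw [hL, hR, hadd 1 2, hadd 2 1]; ring
    · show Bs t x 1 = B t x 1 + (pd 2 (fun y => ecurl (B t) y 0) x
          - pd 0 (fun y => ecurl (B t) y 2) x)
      have hL : Bs t x 1 = pd 2 (fun y => As t y 0) x - pd 0 (fun y => As t y 2) x := by
        rw [hBs t x]; rfl
      have hR : B t x 1 = pd 2 (fun y => A t y 0) x - pd 0 (fun y => A t y 2) x := by
        rw [hB t x]; rfl
      rw [hL, hR, hadd 2 0, hadd 0 2]; ring
    · show Bs t x 2 = B t x 2 + (pd 0 (fun y => ecurl (B t) y 1) x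
          - pd 1 (fun y => ecurl (B t) y 0) x)
      have hL : Bs t x 2 = pd 0 (fun y => As t y 1) x - pd 1 (fun y => As t y 0) x := by
        rw [hBs t x]; rfl
      have hR : B t x 2 = pd 0 (fun y => A t y 1) x - pd 1 (fun y => A t y 0) x := by
        rw [hB t x]; rfl
      rw [hL, hR, hadd 0 1, hadd 1 0]; ring
  -- Statement 5
  have st5 : ∀ t x, tderiv v t x + advect (v t x) (v t) x + egrad (p t) x
      + cross3 (Bs t x) (ecurl (B t) x) = 0 := by
    intro t x
    have h := hmom t x
    rw [st4 t x, ← hBs t x, cross3_antisymm (ecurl (B t) x) (Bs t x), sub_neg_eq_add] at h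
    exact h
  -- Statement 6
  have st6 : ∀ t x, tderiv Bs t x
      + ecurl (fun y => cross3 (Bs t y) (v t y - d • ecurl (B t) y)) x
      + ecurl (fun y => cross3 (ecurl (v t) y) (ecurl (B t) y)) x = 0 := by
    intro t x
    -- differentiability helpers
    have hdBsj : ∀ j, Differentiable ℝ (fun y => Bs t y j) := by
      intro j
      have hfun : (fun y => Bs t y j) = fun y => ecurl (As t) y j :=
        funext fun y => by rw [hBs t y]
      rw [hfun]
      fin_cases j
      · exact (pdf_pd_diff hAs t 1 2).sub (pdf_pd_diff hAs t 2 1)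
      · exact (pdf_pd_diff hAs t 2 0).sub (pdf_pd_diff hAs t 0 2)
      · exact (pdf_pd_diff hAs t 0 1).sub (pdf_pd_diff hAs t 1 0)
    have hdcurlv : ∀ j, Differentiable ℝ (fun y => ecurl (v t) y j) := by
      intro j
      fin_cases j
      · exact (pdf_pd_diff hv t 1 2).sub (pdf_pd_diff hv t 2 1)
      · exact (pdf_pd_diff hv t 2 0).sub (pdf_pd_diff hv t 0 2)
      · exact (pdf_pd_diff hv t 0 1).sub (pdf_pd_diff hv t 1 0)
    have hw : ∀ b : Fin 3, Differentiable ℝ (fun y => v t y b - d * ecurl (B t) y b) :=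
      fun b => (pdf_diff hv t b).sub ((hdcurlB t b).const_mul d)
    have hdc1 : ∀ k, Differentiable ℝ
        (fun y => cross3 (Bs t y) (v t y - d • ecurl (B t) y) k) := by
      intro k
      fin_cases k
      · show Differentiable ℝ (fun y =>
          Bs t y 1 * (v t y 2 - d * ecurl (B t) y 2)
            - Bs t y 2 * (v t y 1 - d * ecurl (B t) y 1))
        exact ((hdBsj 1).mul (hw 2)).sub ((hdBsj 2).mul (hw 1))
      · show Differentiable ℝ (fun y =>
          Bs t y 2 * (v t y 0 - d * ecurl (B t) y 0)
            - Bs t y 0 * (v t y 2 - d * ecurl (B t) y 2))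
        exact ((hdBsj 2).mul (hw 0)).sub ((hdBsj 0).mul (hw 2))
      · show Differentiable ℝ (fun y =>
          Bs t y 0 * (v t y 1 - d * ecurl (B t) y 1)
            - Bs t y 1 * (v t y 0 - d * ecurl (B t) y 0))
        exact ((hdBsj 0).mul (hw 1)).sub ((hdBsj 1).mul (hw 0))
    have hdc2 : ∀ k, Differentiable ℝ
        (fun y => cross3 (ecurl (v t) y) (ecurl (B t) y) k) := by
      intro k
      fin_cases k
      · show Differentiable ℝ (fun y =>
          ecurl (v t) y 1 * ecurl (B t) y 2 - ecurl (v t) y 2 * ecurl (B t) y 1)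
        exact ((hdcurlv 1).mul (hdcurlB t 2)).sub ((hdcurlv 2).mul (hdcurlB t 1))
      · show Differentiable ℝ (fun y =>
          ecurl (v t) y 2 * ecurl (B t) y 0 - ecurl (v t) y 0 * ecurl (B t) y 2)
        exact ((hdcurlv 2).mul (hdcurlB t 0)).sub ((hdcurlv 0).mul (hdcurlB t 2))
      · show Differentiable ℝ (fun y =>
          ecurl (v t) y 0 * ecurl (B t) y 1 - ecurl (v t) y 1 * ecurl (B t) y 0)
        exact ((hdcurlv 0).mul (hdcurlB t 1)).sub ((hdcurlv 1).mul (hdcurlB t 0))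
    have hdegrad : ∀ k, Differentiable ℝ (fun y => egrad (e t) y k) := by
      intro k
      fin_cases k
      · exact diff_pd_slice he t 0
      · exact diff_pd_slice he t 1
      · exact diff_pd_slice he t 2
    -- pointwise key identity from the potential equation
    have keyD : ∀ (k : Fin 3) (y : E3), deriv (fun s => As s y k) t
        = -(cross3 (Bs t y) (v t y - d • ecurl (B t) y) k)
          - cross3 (ecurl (v t) y) (ecurl (B t) y) k - egrad (e t) y k := by
      intro k y
      have h := hpot t y
      rw [st4 t y, ← hBs t y,
        cross3_antisymm (v t y - d • ecurl (B t) y) (Bs t y),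
        cross3_antisymm (ecurl (B t) y) (ecurl (v t) y)] at h
      have hT : deriv (fun s => As s y k) t = tderiv As t y k :=
        deriv_pi3 (diff_pi3 fun i => (pdf_time_diff hAs y i) t) k
      have h3 : tderiv As t y k
          - -(cross3 (Bs t y) (v t y - d • ecurl (B t) y) k)
          - -(cross3 (ecurl (v t) y) (ecurl (B t) y) k)
          + egrad (e t) y k = 0 := congrArg (fun w : E3 => w k) h
      linarith [hT, h3]
    -- the main expansion
    have main : ∀ (i k : Fin 3),
        deriv (fun s => pd i (fun y => As s y k) x) t
          = -(pd i (fun y => cross3 (Bs t y) (v t y - d • ecurl (B t) y) k) x)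
            - pd i (fun y => cross3 (ecurl (v t) y) (ecurl (B t) y) k) x
            - pd i (fun y => egrad (e t) y k) x := by
      intro i k
      calc deriv (fun s => pd i (fun y => As s y k) x) t
          = pd i (fun y => deriv (fun s => As s y k) t) x :=
            (pdf_deriv_swap hAs t x i k).symm
        _ = pd i (fun y => -(cross3 (Bs t y) (v t y - d • ecurl (B t) y) k)
              - cross3 (ecurl (v t) y) (ecurl (B t) y) k - egrad (e t) y k) x :=
            pd_congr (fun y => keyD k y) i x
        _ = pd i (fun y => -(cross3 (Bs t y) (v t y - d • ecurl (B t) y) k)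
              - cross3 (ecurl (v t) y) (ecurl (B t) y) k) x
            - pd i (fun y => egrad (e t) y k) x :=
            pd_sub (((hdc1 k).neg.sub (hdc2 k)) x) ((hdegrad k) x) i
        _ = (pd i (fun y => -(cross3 (Bs t y) (v t y - d • ecurl (B t) y) k)) x
              - pd i (fun y => cross3 (ecurl (v t) y) (ecurl (B t) y) k) x)
            - pd i (fun y => egrad (e t) y k) x := by
            rw [pd_sub ((hdc1 k).fun_neg x) ((hdc2 k) x) i]
        _ = _ := by rw [pd_neg]
    -- time derivative of Bs componentwise
    have hdb : ∀ i, DifferentiableAt ℝ (fun s => Bs s x i) t := by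
      intro i
      have hfun : ∀ j : Fin 3, (fun s => Bs s x j) = fun s => ecurl (As s) x j :=
        fun j => funext fun s => by rw [hBs s x]
      have d0 : DifferentiableAt ℝ (fun s => Bs s x 0) t := by
        rw [hfun 0]
        exact ((pdf_time_pd_diff hAs x 1 2).sub (pdf_time_pd_diff hAs x 2 1)) t
      have d1 : DifferentiableAt ℝ (fun s => Bs s x 1) t := by
        rw [hfun 1]
        exact ((pdf_time_pd_diff hAs x 2 0).sub (pdf_time_pd_diff hAs x 0 2)) t
      have d2 : DifferentiableAt ℝ (fun s => Bs s x 2) t := by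
        rw [hfun 2]
        exact ((pdf_time_pd_diff hAs x 0 1).sub (pdf_time_pd_diff hAs x 1 0)) t
      fin_cases i
      exacts [d0, d1, d2]
    have hD : DifferentiableAt ℝ (fun s => Bs s x) t := diff_pi3 hdb
    have hsw : ∀ (a b : Fin 3), pd a (fun y => egrad (e t) y b) x
        = pd b (fun y => egrad (e t) y a) x := by
      intro a b
      fin_cases a <;> fin_cases b <;> exact pd_pd_swap he t x _ _
    ext k
    fin_cases k
    · show tderiv Bs t x 0
        + (pd 1 (fun y => cross3 (Bs t y) (v t y - d • ecurl (B t) y) 2) x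
          - pd 2 (fun y => cross3 (Bs t y) (v t y - d • ecurl (B t) y) 1) x)
        + (pd 1 (fun y => cross3 (ecurl (v t) y) (ecurl (B t) y) 2) x
          - pd 2 (fun y => cross3 (ecurl (v t) y) (ecurl (B t) y) 1) x) = 0
      have e1 : tderiv Bs t x 0 = deriv (fun s => Bs s x 0) t := (deriv_pi3 hD 0).symm
      have e2 : (fun s => Bs s x 0)
          = fun s => pd 1 (fun y => As s y 2) x - pd 2 (fun y => As s y 1) x :=
        funext fun s => by rw [hBs s x]; rfl
      have h0 : tderiv Bs t x 0 = deriv (fun s => pd 1 (fun y => As s y 2) x) t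
          - deriv (fun s => pd 2 (fun y => As s y 1) x) t := by
        rw [e1, e2]
        exact deriv_fun_sub ((pdf_time_pd_diff hAs x 1 2) t) ((pdf_time_pd_diff hAs x 2 1) t)
      rw [h0, main 1 2, main 2 1]
      linarith [hsw 1 2]
    · show tderiv Bs t x 1
        + (pd 2 (fun y => cross3 (Bs t y) (v t y - d • ecurl (B t) y) 0) x
          - pd 0 (fun y => cross3 (Bs t y) (v t y - d • ecurl (B t) y) 2) x)
        + (pd 2 (fun y => cross3 (ecurl (v t) y) (ecurl (B t) y) 0) x
          - pd 0 (fun y => cross3 (ecurl (v t) y) (ecurl (B t) y) 2) x) = 0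
      have e1 : tderiv Bs t x 1 = deriv (fun s => Bs s x 1) t := (deriv_pi3 hD 1).symm
      have e2 : (fun s => Bs s x 1)
          = fun s => pd 2 (fun y => As s y 0) x - pd 0 (fun y => As s y 2) x :=
        funext fun s => by rw [hBs s x]; rfl
      have h0 : tderiv Bs t x 1 = deriv (fun s => pd 2 (fun y => As s y 0) x) t
          - deriv (fun s => pd 0 (fun y => As s y 2) x) t := by
        rw [e1, e2]
        exact deriv_fun_sub ((pdf_time_pd_diff hAs x 2 0) t) ((pdf_time_pd_diff hAs x 0 2) t)
      rw [h0, main 2 0, main 0 2]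
      linarith [hsw 2 0]
    · show tderiv Bs t x 2
        + (pd 0 (fun y => cross3 (Bs t y) (v t y - d • ecurl (B t) y) 1) x
          - pd 1 (fun y => cross3 (Bs t y) (v t y - d • ecurl (B t) y) 0) x)
        + (pd 0 (fun y => cross3 (ecurl (v t) y) (ecurl (B t) y) 1) x
          - pd 1 (fun y => cross3 (ecurl (v t) y) (ecurl (B t) y) 0) x) = 0
      have e1 : tderiv Bs t x 2 = deriv (fun s => Bs s x 2) t := (deriv_pi3 hD 2).symm
      have e2 : (fun s => Bs s x 2)
          = fun s => pd 0 (fun y => As s y 1) x - pd 1 (fun y => As s y 0) x :=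
        funext fun s => by rw [hBs s x]; rfl
      have h0 : tderiv Bs t x 2 = deriv (fun s => pd 0 (fun y => As s y 1) x) t
          - deriv (fun s => pd 1 (fun y => As s y 0) x) t := by
        rw [e1, e2]
        exact deriv_fun_sub ((pdf_time_pd_diff hAs x 0 1) t) ((pdf_time_pd_diff hAs x 1 0) t)
      rw [h0, main 0 1, main 1 0]
      linarith [hsw 0 1]
  exact ⟨fun t x => ediv_curl_zero hA t (B t) (hB t) x,
    fun t x => ediv_curl_zero hAs t (Bs t) (hBs t) x, st3, st4, st5, st6⟩
end
end

section
/- Let v : ℝ³ → ℝ³ be a C² vector field with compact support. Then Σ_{i,j=1}^{3} ∫_{ℝ³} (∂ᵢvⱼ(x))² dx = ∫_{ℝ³} (div v(x))² dx + ∫_{ℝ³} ‖curl v(x)‖² dx. -/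
noncomputable section

open MeasureTheory Real

/-! Pointwise, `Σᵢⱼ (∂ᵢvⱼ)² = Σᵢⱼ ∂ᵢvⱼ ∂ⱼvᵢ + ‖curl v‖²`, since the curl collects the
antisymmetric part of the Jacobian. Integrating by parts twice and using the symmetry of
second derivatives, `∫ ∂ᵢvⱼ ∂ⱼvᵢ = ∫ ∂ⱼvⱼ ∂ᵢvᵢ`, so the first sum integrates to `∫ (div v)²`. -/

section

variable {E : Type*} [NormedAddCommGroup E] [NormedSpace ℝ E]

theorem fderiv_fderiv_apply_comm {f : E → ℝ} (hf : ContDiff ℝ 2 f) (x u w : E) :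
    fderiv ℝ (fderiv ℝ f · u) x w = fderiv ℝ (fderiv ℝ f · w) x u := by
  have hdf : Differentiable ℝ (fderiv ℝ f) :=
    (hf.fderiv_right le_rfl).differentiable one_ne_zero
  rw [fderiv_clm_apply (hdf x) (differentiableAt_const _),
    fderiv_clm_apply (hdf x) (differentiableAt_const _)]
  simpa using (hf.contDiffAt.isSymmSndFDerivAt (by simp)).eq w u

variable [FiniteDimensional ℝ E] [MeasurableSpace E] [BorelSpace E]
  (μ : Measure E) [μ.IsAddHaarMeasure]

theorem integral_fderiv_mul_fderiv_comm {f g : E → ℝ} (hf : ContDiff ℝ 2 f)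
    (hfs : HasCompactSupport f) (hg : ContDiff ℝ 1 g) (u w : E) :
    ∫ x, fderiv ℝ f x u * fderiv ℝ g x w ∂μ = ∫ x, fderiv ℝ f x w * fderiv ℝ g x u ∂μ := by
  have hdf : ContDiff ℝ 1 (fderiv ℝ f) := hf.fderiv_right le_rfl
  have integrable_mul {φ ψ : E → ℝ} (hφ : Continuous φ) (hφs : HasCompactSupport φ)
      (hψ : Continuous ψ) : Integrable (fun x ↦ φ x * ψ x) μ :=
    (hφ.mul hψ).integrable_of_hasCompactSupport hφs.mul_right
  have by_parts (u w : E) : ∫ x, fderiv ℝ f x u * fderiv ℝ g x w ∂μ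
      = - ∫ x, fderiv ℝ (fderiv ℝ f · u) x w * g x ∂μ := by
    have hfu : ContDiff ℝ 1 (fderiv ℝ f · u) := hdf.clm_apply contDiff_const
    exact integral_mul_fderiv_eq_neg_fderiv_mul_of_integrable
      (integrable_mul ((hfu.continuous_fderiv one_ne_zero).clm_apply continuous_const)
        ((hfs.fderiv_apply ℝ u).fderiv_apply ℝ w) hg.continuous)
      (integrable_mul hfu.continuous (hfs.fderiv_apply ℝ u)
        ((hg.continuous_fderiv one_ne_zero).clm_apply continuous_const))
      (integrable_mul hfu.continuous (hfs.fderiv_apply ℝ u) hg.continuous)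
      (fun x _ ↦ hfu.differentiable one_ne_zero x) (fun x _ ↦ hg.differentiable one_ne_zero x)
  simp only [by_parts, fderiv_fderiv_apply_comm hf _ u w]

end

theorem ediv_eq_sum (v : E3 → E3) (x : E3) : ediv v x = ∑ i, pd i (fun y ↦ v y i) x := by
  simp [ediv, Fin.sum_univ_three]

theorem norm_ecurl_sq (v : E3 → E3) (x : E3) :
    ‖ecurl v x‖ ^ 2 = ∑ i, ∑ j, pd i (fun y ↦ v y j) x ^ 2
      - ∑ i, ∑ j, pd i (fun y ↦ v y j) x * pd j (fun y ↦ v y i) x := by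
  rw [EuclideanSpace.norm_eq, sq_sqrt (by positivity)]
  simp only [ecurl, mk3, WithLp.equiv_symm_apply, norm_eq_abs, sq_abs, Fin.sum_univ_three,
    Matrix.cons_val_zero, Matrix.cons_val_one, Matrix.cons_val]
  ring

theorem integrable_pd_mul_pd {v : E3 → E3} (hv : ContDiff ℝ 1 v) (hvs : HasCompactSupport v)
    (i j k l : Fin 3) :
    Integrable (fun x ↦ pd i (fun y ↦ v y k) x * pd j (fun y ↦ v y l) x) :=
  have hc (k : Fin 3) : Continuous (fderiv ℝ (fun y ↦ v y k)) :=
    (contDiff_euclidean.mp hv k).continuous_fderiv one_ne_zero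
  ((hc k).clm_apply continuous_const |>.mul ((hc l).clm_apply continuous_const))
    |>.integrable_of_hasCompactSupport
      ((hvs.comp_left (g := fun w : E3 ↦ w k) rfl).fderiv_apply ℝ _).mul_right

theorem integral_sum_pd_mul_pd_swap_eq_integral_ediv_sq {v : E3 → E3} (hv : ContDiff ℝ 2 v)
    (hvs : HasCompactSupport v) :
    ∫ x, ∑ i, ∑ j, pd i (fun y ↦ v y j) x * pd j (fun y ↦ v y i) x = ∫ x, ediv v x ^ 2 := by
  have hc (j : Fin 3) : ContDiff ℝ 2 (fun y ↦ v y j) := contDiff_euclidean.mp hv j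
  have hcs (j : Fin 3) : HasCompactSupport (fun y ↦ v y j) :=
    hvs.comp_left (g := fun w : E3 ↦ w j) rfl
  have hint := integrable_pd_mul_pd (hv.of_le one_le_two) hvs
  simp only [ediv_eq_sum, sq, Finset.sum_mul_sum]
  rw [integral_finsetSum _ fun i _ ↦ integrable_finsetSum _ fun j _ ↦ hint _ _ _ _,
    integral_finsetSum _ fun i _ ↦ integrable_finsetSum _ fun j _ ↦ hint _ _ _ _]
  refine Finset.sum_congr rfl fun i _ ↦ ?_
  rw [integral_finsetSum _ fun j _ ↦ hint _ _ _ _, integral_finsetSum _ fun j _ ↦ hint _ _ _ _]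
  refine Finset.sum_congr rfl fun j _ ↦ ?_
  calc _ = ∫ x, pd j (fun y ↦ v y j) x * pd i (fun y ↦ v y i) x :=
        integral_fderiv_mul_fderiv_comm volume (hc j) (hcs j) ((hc i).of_le one_le_two) _ _
    _ = _ := by simp only [mul_comm]

/-- Div-curl identity: for a compactly supported `C²` vector field on `ℝ³`,
`Σ_{i,j} ∫ (∂ᵢvⱼ)² = ∫ (div v)² + ∫ ‖curl v‖²`. -/
theorem div_curl_L2_identity
    (v : E3 → E3) (hv : ContDiff ℝ 2 v) (hsupp : HasCompactSupport v) :
    (∑ i : Fin 3, ∑ j : Fin 3, ∫ x : E3, (pd i (fun y => v y j) x)^2)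
      = (∫ x : E3, (ediv v x)^2) + (∫ x : E3, ‖ecurl v x‖^2) := by
  have hint := integrable_pd_mul_pd (hv.of_le one_le_two) hsupp
  have hsq (i j : Fin 3) : Integrable (fun x ↦ pd i (fun y ↦ v y j) x ^ 2) := by
    simpa only [sq] using hint i i j j
  have hcurl : ∫ x, ‖ecurl v x‖ ^ 2 = (∫ x, ∑ i, ∑ j, pd i (fun y ↦ v y j) x ^ 2)
      - ∫ x, ∑ i, ∑ j, pd i (fun y ↦ v y j) x * pd j (fun y ↦ v y i) x := by
    simp only [norm_ecurl_sq]
    exact integral_sub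
      (integrable_finsetSum _ fun i _ ↦ integrable_finsetSum _ fun j _ ↦ hsq i j)
      (integrable_finsetSum _ fun i _ ↦ integrable_finsetSum _ fun j _ ↦ hint i j j i)
  rw [hcurl, integral_sum_pd_mul_pd_swap_eq_integral_ediv_sq hv hsupp,
    integral_finsetSum _ fun i _ ↦ integrable_finsetSum _ fun j _ ↦ hsq i j]
  simp only [integral_finsetSum _ fun j _ ↦ hsq _ j]
  ring
end
end

section
/- For i ∈ {1,2,3}, ξ ∈ ℝ³ with ξ ≠ 0, g ∈ ℝ, and w ∈ ℝ³ with ⟨ξ, w⟩ = 0, one has ‖(ξᵢ/‖ξ‖²)·(g·ξ − ξ × w)‖² ≤ g² + ‖w‖². Consequently the symbol (g, w) ↦ −(ξᵢ/‖ξ‖²)·(g·ξ − ξ × w), which sends (div v, curl v) to the i-th partial derivative of v on the Fourier side, is bounded uniformly in ξ. -/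
noncomputable section

open MeasureTheory Real

/-! Since `ξ × w ⊥ ξ`, expanding the square and using Lagrange's identity
`‖ξ × w‖² = ‖ξ‖²‖w‖² - ⟨ξ, w⟩²` gives `‖g ξ - ξ × w‖² ≤ ‖ξ‖² (g² + ‖w‖²)`. The prefactor contributes
`ξᵢ² / ‖ξ‖⁴`, and `ξᵢ² ≤ ‖ξ‖²`. At `ξ = 0` the prefactor is `0` by the convention `x / 0 = 0`. -/

open Matrix
open scoped RealInnerProductSpace

lemma cross3_eq_toLp_cross (u w : E3) : cross3 u w = WithLp.toLp 2 (u.ofLp ⨯₃ w.ofLp) := by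
  ext i
  fin_cases i <;> rfl

lemma real_inner_eq_dotProduct (u w : E3) : ⟪u, w⟫ = u.ofLp ⬝ᵥ w.ofLp := by
  rw [EuclideanSpace.inner_eq_star_dotProduct, star_trivial, dotProduct_comm]

lemma inner_self_cross3 (u w : E3) : ⟪u, cross3 u w⟫ = 0 := by
  rw [real_inner_eq_dotProduct, cross3_eq_toLp_cross, dot_self_cross]

lemma norm_cross3_sq (u w : E3) : ‖cross3 u w‖ ^ 2 = ‖u‖ ^ 2 * ‖w‖ ^ 2 - ⟪u, w⟫ ^ 2 := by
  simp only [← real_inner_self_eq_norm_sq, real_inner_eq_dotProduct, cross3_eq_toLp_cross,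
    cross_dot_cross, dotProduct_comm w.ofLp]
  ring

lemma norm_smul_sub_cross3_sq (g : ℝ) (u w : E3) :
    ‖g • u - cross3 u w‖ ^ 2 = ‖u‖ ^ 2 * (g ^ 2 + ‖w‖ ^ 2) - ⟪u, w⟫ ^ 2 := by
  rw [norm_sub_sq_real, norm_cross3_sq, inner_smul_left, inner_self_cross3, norm_smul,
    Real.norm_eq_abs, mul_pow, sq_abs]
  ring

lemma norm_smul_sub_cross3_sq_le (g : ℝ) (u w : E3) :
    ‖g • u - cross3 u w‖ ^ 2 ≤ ‖u‖ ^ 2 * (g ^ 2 + ‖w‖ ^ 2) := by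
  rw [norm_smul_sub_cross3_sq]
  exact sub_le_self _ (sq_nonneg _)

lemma sq_apply_div_norm_sq_le_one {ι : Type*} [Fintype ι] (u : EuclideanSpace ℝ ι) (i : ι) :
    u i ^ 2 / ‖u‖ ^ 2 ≤ 1 := by
  refine div_le_one_of_le₀ ?_ (sq_nonneg _)
  rw [← sq_abs, ← Real.norm_eq_abs]
  exact pow_le_pow_left₀ (norm_nonneg _) (PiLp.norm_apply_le u i) 2

theorem div_curl_symbol_bound_general
    (i : Fin 3) (ξ : E3) (g : ℝ) (w : E3) :
    ‖(ξ i / ‖ξ‖^2) • (g • ξ - cross3 ξ w)‖^2 ≤ g^2 + ‖w‖^2 := by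
  have hcoeff : (ξ i / ‖ξ‖ ^ 2) ^ 2 * ‖ξ‖ ^ 2 = ξ i ^ 2 / ‖ξ‖ ^ 2 := by
    rcases eq_or_ne ‖ξ‖ 0 with h | h
    · simp [h]
    · field_simp
  calc ‖(ξ i / ‖ξ‖ ^ 2) • (g • ξ - cross3 ξ w)‖ ^ 2
      = (ξ i / ‖ξ‖ ^ 2) ^ 2 * ‖g • ξ - cross3 ξ w‖ ^ 2 := by
        rw [norm_smul, Real.norm_eq_abs, mul_pow, sq_abs]
    _ ≤ (ξ i / ‖ξ‖ ^ 2) ^ 2 * (‖ξ‖ ^ 2 * (g ^ 2 + ‖w‖ ^ 2)) :=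
        mul_le_mul_of_nonneg_left (norm_smul_sub_cross3_sq_le g ξ w) (sq_nonneg _)
    _ = ξ i ^ 2 / ‖ξ‖ ^ 2 * (g ^ 2 + ‖w‖ ^ 2) := by rw [← mul_assoc, hcoeff]
    _ ≤ g ^ 2 + ‖w‖ ^ 2 :=
        mul_le_of_le_one_left (by positivity) (sq_apply_div_norm_sq_le_one ξ i)

/-- Symbol bound for the compressible div-curl system: for `ξ ≠ 0`,
`g ∈ ℝ` and `w ⊥ ξ`, `‖(ξᵢ/‖ξ‖²)(g ξ − ξ × w)‖² ≤ g² + ‖w‖²`. -/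
theorem div_curl_symbol_bound
    (i : Fin 3) (ξ : E3) (hξ : ξ ≠ 0) (g : ℝ) (w : E3)
    (hw : (inner ℝ ξ w : ℝ) = 0) :
    ‖(ξ i / ‖ξ‖^2) • (g • ξ - cross3 ξ w)‖^2 ≤ g^2 + ‖w‖^2 :=
  div_curl_symbol_bound_general i ξ g w
end
end
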